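/- arXiv:math/0602130 — 11 statements merged into one kernel-verified Lean document; each statement's English description precedes it below -/
import Mathlib

section
/- The map Φ defined by Φ(X,Y)(t) := (inf_{0≤s≤t} (Y(t) - Y(s) + X(s))) ∧ Y(t) satisfies Φ(X,Y) = X - R(X - Y), where R is the one-dimensional Skorohod reflection map R(Z)(t) = sup_{0≤s≤t}(Z(t) - Z(s)) ∨ Z(t). Consequently, Φ is continuous with respect to the compact uniform topology (on each [0,T], sup-norm), and is non-decreasing in its first argument X. -/
/-- `Φ(X,Y)(t) := (inf_{0 ≤ s ≤ t} (Y(t) - Y(s) + X(s))) ∧ Y(t)`. -/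
noncomputable def Phi (X Y : ℝ → ℝ) (t : ℝ) : ℝ :=
  min (sInf ((fun s => Y t - Y s + X s) '' Set.Icc 0 t)) (Y t)

/-- The one-dimensional Skorohod reflection map. -/
noncomputable def reflMap (Z : ℝ → ℝ) (t : ℝ) : ℝ :=
  max (sSup ((fun s => Z t - Z s) '' Set.Icc 0 t)) (Z t)

private lemma sub_csSup_eq (a : ℝ) {S : Set ℝ} (hne : S.Nonempty) (hb : BddAbove S) :
    a - sSup S = sInf ((fun x => a - x) '' S) := by
  apply le_antisymm
  · exact le_csInf (hne.image _)
      (by rintro y ⟨x, hx, rfl⟩; exact sub_le_sub_left (le_csSup hb hx) a)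
  · have hbb : BddBelow ((fun x => a - x) '' S) :=
      ⟨a - sSup S, by rintro y ⟨x, hx, rfl⟩; exact sub_le_sub_left (le_csSup hb hx) a⟩
    have h : sSup S ≤ a - sInf ((fun x => a - x) '' S) := by
      apply csSup_le hne
      intro x hx
      have h2 : sInf ((fun x => a - x) '' S) ≤ a - x := csInf_le hbb ⟨x, hx, rfl⟩
      linarith
    linarith

private lemma Phi_identity (X Y : ℝ → ℝ) (hX0 : ∀ t, 0 ≤ X t)
    (hY : Monotone Y) (t : ℝ) (ht : 0 ≤ t) :
    Phi X Y t = X t - reflMap (fun s => X s - Y s) t := by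
  have hne : (Set.Icc (0:ℝ) t).Nonempty := Set.nonempty_Icc.2 ht
  have hbdd : BddAbove ((fun s => (X t - Y t) - (X s - Y s)) '' Set.Icc 0 t) := by
    refine ⟨X t, ?_⟩
    rintro y ⟨s, hs, rfl⟩
    have h1 := hX0 s
    have h2 := hY hs.2
    simp only
    linarith
  have himg : (fun s => Y t - Y s + X s) '' Set.Icc 0 t
      = (fun x => X t - x) '' ((fun s => (X t - Y t) - (X s - Y s)) '' Set.Icc 0 t) := by
    rw [Set.image_image]
    apply Set.image_congr'
    intro s
    ring
  rw [Phi, reflMap, himg, ← sub_csSup_eq (X t) (hne.image _) hbdd]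
  rcases le_total (sSup ((fun s => (X t - Y t) - (X s - Y s)) '' Set.Icc 0 t)) (X t - Y t)
    with hc | hc
  · rw [max_eq_right hc, min_eq_right (by linarith)]
    ring
  · rw [max_eq_left hc, min_eq_left (by linarith)]

private lemma abs_csInf_sub {I : Set ℝ} (hne : I.Nonempty) {f g : ℝ → ℝ}
    (hbf : BddBelow (f '' I)) (hbg : BddBelow (g '' I)) {c : ℝ}
    (h : ∀ s ∈ I, |f s - g s| ≤ c) :
    |sInf (f '' I) - sInf (g '' I)| ≤ c := by
  rw [abs_sub_le_iff]
  constructor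
  · have key : sInf (f '' I) - c ≤ sInf (g '' I) := by
      apply le_csInf (hne.image g)
      rintro y ⟨s, hs, rfl⟩
      have h1 := csInf_le hbf (Set.mem_image_of_mem f hs)
      have h2 := (abs_sub_le_iff.1 (h s hs)).1
      linarith
    linarith
  · have key : sInf (g '' I) - c ≤ sInf (f '' I) := by
      apply le_csInf (hne.image f)
      rintro y ⟨s, hs, rfl⟩
      have h1 := csInf_le hbg (Set.mem_image_of_mem g hs)
      have h2 := (abs_sub_le_iff.1 (h s hs)).2
      linarith
    linarith

private lemma phi_dist (X X' Y Y' : ℝ → ℝ)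
    (hX0 : ∀ s, 0 ≤ X s) (hX'0 : ∀ s, 0 ≤ X' s) (hY : Monotone Y) (hY' : Monotone Y')
    (t a b : ℝ) (ht : 0 ≤ t)
    (hXa : ∀ s ∈ Set.Icc 0 t, |X s - X' s| ≤ a)
    (hYb : ∀ s ∈ Set.Icc 0 t, |Y s - Y' s| ≤ b) :
    |Phi X Y t - Phi X' Y' t| ≤ a + 2*b := by
  have hne : (Set.Icc (0:ℝ) t).Nonempty := Set.nonempty_Icc.2 ht
  have ht' : t ∈ Set.Icc (0:ℝ) t := ⟨ht, le_refl t⟩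
  have hbdd : BddBelow ((fun s => Y t - Y s + X s) '' Set.Icc 0 t) := by
    refine ⟨0, ?_⟩
    rintro y ⟨s, hs, rfl⟩
    have h1 := hY hs.2
    have h2 := hX0 s
    simp only
    linarith
  have hbdd' : BddBelow ((fun s => Y' t - Y' s + X' s) '' Set.Icc 0 t) := by
    refine ⟨0, ?_⟩
    rintro y ⟨s, hs, rfl⟩
    have h1 := hY' hs.2
    have h2 := hX'0 s
    simp only
    linarith
  have hA : |sInf ((fun s => Y t - Y s + X s) '' Set.Icc 0 t)
      - sInf ((fun s => Y' t - Y' s + X' s) '' Set.Icc 0 t)| ≤ a + 2*b := by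
    apply abs_csInf_sub hne hbdd hbdd'
    intro s hs
    have h1 := abs_sub_le_iff.1 (hXa s hs)
    have h2 := abs_sub_le_iff.1 (hYb s hs)
    have h3 := abs_sub_le_iff.1 (hYb t ht')
    rw [abs_sub_le_iff]
    constructor <;> linarith [h1.1, h1.2, h2.1, h2.2, h3.1, h3.2]
  have hYt := hYb t ht'
  have hb0 : 0 ≤ b := le_trans (abs_nonneg _) hYt
  calc |Phi X Y t - Phi X' Y' t|
      ≤ max (|sInf ((fun s => Y t - Y s + X s) '' Set.Icc 0 t)
          - sInf ((fun s => Y' t - Y' s + X' s) '' Set.Icc 0 t)|) (|Y t - Y' t|) :=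
        abs_min_sub_min_le_max _ _ _ _
    _ ≤ a + 2*b := by
        apply max_le hA
        have ha0 : 0 ≤ a := le_trans (abs_nonneg _) (hXa t ht')
        linarith

/-- `Φ(X,Y) = X - R(X - Y)`; consequently `Φ` is continuous for the compact uniform
topology, and non-decreasing in its first argument. -/
theorem Phi_eq_sub_reflMap :
    -- identity Φ(X,Y) = X - R(X-Y)
    (∀ X Y : ℝ → ℝ, Monotone X → (∀ t, 0 ≤ X t) → Monotone Y → (∀ t, 0 ≤ Y t) → Y 0 = 0 →
      ∀ t, 0 ≤ t → Phi X Y t = X t - reflMap (fun s => X s - Y s) t) ∧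
    -- Φ is non-decreasing in its first argument
    (∀ X X' Y : ℝ → ℝ, Monotone X → (∀ t, 0 ≤ X t) → Monotone X' → (∀ t, 0 ≤ X' t) →
      Monotone Y → (∀ t, 0 ≤ Y t) → Y 0 = 0 →
      (∀ t, X t ≤ X' t) → ∀ t, 0 ≤ t → Phi X Y t ≤ Phi X' Y t) ∧
    -- Φ is (sequentially) continuous for the compact uniform topology
    (∀ (Xn Yn : ℕ → ℝ → ℝ) (X Y : ℝ → ℝ),
      (∀ n, Monotone (Xn n)) → (∀ n t, 0 ≤ Xn n t) →
      (∀ n, Monotone (Yn n)) → (∀ n t, 0 ≤ Yn n t) → (∀ n, Yn n 0 = 0) →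
      Monotone X → (∀ t, 0 ≤ X t) → Monotone Y → (∀ t, 0 ≤ Y t) → Y 0 = 0 →
      (∀ T > (0 : ℝ), TendstoUniformlyOn (fun n => Xn n) X Filter.atTop (Set.Icc 0 T)) →
      (∀ T > (0 : ℝ), TendstoUniformlyOn (fun n => Yn n) Y Filter.atTop (Set.Icc 0 T)) →
      (∀ T > (0 : ℝ), TendstoUniformlyOn (fun n => Phi (Xn n) (Yn n)) (Phi X Y)
        Filter.atTop (Set.Icc 0 T))) := by
  refine ⟨?_, ?_, ?_⟩
  · intro X Y _ hX0 hY _ _ t ht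
    exact Phi_identity X Y hX0 hY t ht
  · intro X X' Y _ hX0 _ _ hY _ _ hle t ht
    have hne : (Set.Icc (0:ℝ) t).Nonempty := Set.nonempty_Icc.2 ht
    have hbdd : BddBelow ((fun s => Y t - Y s + X s) '' Set.Icc 0 t) := by
      refine ⟨0, ?_⟩
      rintro y ⟨s, hs, rfl⟩
      have h1 := hY hs.2
      have h2 := hX0 s
      simp only
      linarith
    unfold Phi
    refine min_le_min ?_ le_rfl
    apply le_csInf (hne.image _)
    rintro y ⟨s, hs, rfl⟩
    have h1 : sInf ((fun s => Y t - Y s + X s) '' Set.Icc 0 t) ≤ Y t - Y s + X s :=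
      csInf_le hbdd (Set.mem_image_of_mem _ hs)
    have h2 := hle s
    simp only
    linarith
  · intro Xn Yn X Y hXn hXn0 hYn hYn0 _ _ hX0 hY _ _ hXc hYc T hT
    rw [Metric.tendstoUniformlyOn_iff]
    intro ε hε
    have hXe := (Metric.tendstoUniformlyOn_iff.1 (hXc T hT)) (ε/4) (by linarith)
    have hYe := (Metric.tendstoUniformlyOn_iff.1 (hYc T hT)) (ε/4) (by linarith)
    filter_upwards [hXe, hYe] with n hXn' hYn' t htT
    have hsub : Set.Icc (0:ℝ) t ⊆ Set.Icc 0 T := Set.Icc_subset_Icc le_rfl htT.2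
    have h := phi_dist X (Xn n) Y (Yn n) hX0 (hXn0 n) hY (hYn n) t (ε/4) (ε/4) htT.1
      (fun s hs => le_of_lt (by rw [← Real.dist_eq]; exact hXn' s (hsub hs)))
      (fun s hs => le_of_lt (by rw [← Real.dist_eq]; exact hYn' s (hsub hs)))
    rw [Real.dist_eq]
    linarith
end

section
/- If Y(t) = μt for some μ ≥ 0, then Φ(X,Y)(t) = μt ∧ inf_{0≤s≤t}(X(s) + μ(t-s)). If moreover X is concave (and non-decreasing with X(0) ≥ 0), then Φ(X,Y)(t) = X(t) ∧ μt. -/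
/-- If `Y(t) = μ t` with `μ ≥ 0`, then `Φ(X,Y)(t) = μt ∧ inf_{0≤s≤t}(X(s) + μ(t-s))`;
if moreover `X` is concave (non-decreasing, `X(0) ≥ 0`), then `Φ(X,Y)(t) = X(t) ∧ μt`. -/
theorem Phi_linear_service (X : ℝ → ℝ) (hX : Monotone X) (hX0 : ∀ t, 0 ≤ X t)
    (μ : ℝ) (hμ : 0 ≤ μ) :
    (∀ t, 0 ≤ t →
      Phi X (fun u => μ * u) t
        = min (μ * t) (sInf ((fun s => X s + μ * (t - s)) '' Set.Icc 0 t))) ∧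
    (ConcaveOn ℝ (Set.Ici 0) X →
      ∀ t, 0 ≤ t → Phi X (fun u => μ * u) t = min (X t) (μ * t)) := by
  have himg : ∀ t : ℝ,
      ((fun s => (fun u => μ * u) t - (fun u => μ * u) s + X s) '' Set.Icc 0 t)
        = ((fun s => X s + μ * (t - s)) '' Set.Icc 0 t) := by
    intro t
    exact congrArg (fun f => f '' Set.Icc 0 t) (funext fun s => by ring)
  constructor
  · intro t ht
    rw [Phi, himg, min_comm]
  · intro hconc t ht
    -- key bound: every element of the image is ≥ min (X t) (μ * t)
    have key : ∀ x ∈ ((fun s => (fun u => μ * u) t - (fun u => μ * u) s + X s)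
        '' Set.Icc 0 t), min (X t) (μ * t) ≤ x := by
      rintro x ⟨s, ⟨hs0, hst⟩, rfl⟩
      simp only
      rcases eq_or_lt_of_le ht with rfl | htpos
      · have hs : s = 0 := le_antisymm hst hs0
        subst hs
        simpa using min_le_of_right_le (le_of_eq (mul_zero μ).symm) |>.trans (hX0 0)
      · set l : ℝ := s / t with hl
        have hl0 : 0 ≤ l := div_nonneg hs0 htpos.le
        have hl1 : l ≤ 1 := (div_le_one htpos).2 hst
        have hslt : l * t = s := div_mul_cancel₀ s (ne_of_gt htpos)
        have hc := hconc.2 Set.self_mem_Ici (Set.mem_Ici.2 ht)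
          (show (0:ℝ) ≤ 1 - l by linarith) hl0 (show 1 - l + l = 1 by ring)
        simp only [smul_eq_mul, mul_zero, zero_add, hslt] at hc
        -- hc : (1 - l) * X 0 + l * X t ≤ X s
        have h1 : l * X t ≤ X s := by nlinarith [hX0 0]
        have h2 : min (X t) (μ * t) ≤ (1 - l) * (μ * t) + l * X t := by
          have ha := min_le_left (X t) (μ * t)
          have hb := min_le_right (X t) (μ * t)
          nlinarith
        have : (1 - l) * (μ * t) = μ * t - μ * s := by rw [← hslt]; ring
        linarith
    have hne : ((fun s => (fun u => μ * u) t - (fun u => μ * u) s + X s)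
        '' Set.Icc 0 t).Nonempty := ⟨_, ⟨t, ⟨ht, le_refl t⟩, rfl⟩⟩
    have hbdd : BddBelow ((fun s => (fun u => μ * u) t - (fun u => μ * u) s + X s)
        '' Set.Icc 0 t) := ⟨min (X t) (μ * t), key⟩
    have hle : sInf ((fun s => (fun u => μ * u) t - (fun u => μ * u) s + X s)
        '' Set.Icc 0 t) ≤ X t := by
      apply csInf_le hbdd
      exact ⟨t, ⟨ht, le_refl t⟩, by simp⟩
    have hge := le_csInf hne key
    rw [Phi]
    refine le_antisymm (min_le_min hle le_rfl) (le_min hge (min_le_right _ _))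
end

section
/- Let A : [0,∞) → ℝ₊ be cadlag non-decreasing, S : [0,∞) → ℝ₊ be cadlag non-decreasing with S(0)=0, and let D = Φ(A,S), i.e. D(t) = (inf_{0≤s≤t}(S(t)-S(s)+A(s))) ∧ S(t). Fix u ≥ 0 and define Ã(t) := A(t+u) - D(u) and S̃(t) := S(t+u) - S(u). Then D̃ := Φ(Ã, S̃) satisfies D̃(t) = D(t+u) - D(u) for all t ≥ 0. -/
lemma csInf_image_add_const (T : Set ℝ) (hne : T.Nonempty) (hbd : BddBelow T) (c : ℝ) :
    sInf ((fun y => y + c) '' T) = sInf T + c := by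
  obtain ⟨b, hb⟩ := hbd
  have hne' : ((fun y => y + c) '' T).Nonempty := hne.image _
  have hbd' : BddBelow ((fun y => y + c) '' T) := by
    refine ⟨b + c, ?_⟩
    rintro _ ⟨x, hx, rfl⟩
    have := hb hx
    dsimp only
    linarith
  apply le_antisymm
  · have h1 : sInf ((fun y => y + c) '' T) - c ≤ sInf T := by
      apply le_csInf hne
      intro x hx
      have : sInf ((fun y => y + c) '' T) ≤ x + c :=
        csInf_le hbd' ⟨x, hx, rfl⟩
      linarith
    linarith
  · apply le_csInf hne'
    rintro _ ⟨x, hx, rfl⟩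
    have : sInf T ≤ x := csInf_le ⟨b, hb⟩ hx
    dsimp only
    linarith

lemma csInf_image_eq_of_eqOn (f g : ℝ → ℝ) (s : Set ℝ) (h : ∀ x ∈ s, f x = g x) :
    sInf (f '' s) = sInf (g '' s) := by
  congr 1
  ext y
  constructor
  · rintro ⟨x, hx, rfl⟩; exact ⟨x, hx, (h x hx).symm⟩
  · rintro ⟨x, hx, rfl⟩; exact ⟨x, hx, h x hx⟩

/-- Time-shift property: with `D = Φ(A,S)`, `Ã(t) = A(t+u) - D(u)`,
`S̃(t) = S(t+u) - S(u)`, one has `Φ(Ã,S̃)(t) = D(t+u) - D(u)`. -/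
theorem Phi_shift (A S : ℝ → ℝ) (hA : Monotone A) (hA0 : ∀ t, 0 ≤ A t)
    (hS : Monotone S) (hS0 : ∀ t, 0 ≤ S t) (hSz : S 0 = 0)
    (u : ℝ) (hu : 0 ≤ u) :
    ∀ t, 0 ≤ t →
      Phi (fun s => A (s + u) - Phi A S u) (fun s => S (s + u) - S u) t
        = Phi A S (t + u) - Phi A S u := by
  intro t ht
  -- notation
  set F : ℝ → ℝ → ℝ := fun v r => S v - S r + A r with hF
  have hFbd : ∀ v, ∀ r ∈ Set.Icc (0:ℝ) v, (0:ℝ) ≤ F v r := by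
    intro v r hr
    have h1 : S r ≤ S v := hS hr.2
    have h2 := hA0 r
    simp only [hF]
    linarith
  have htu : (0:ℝ) ≤ t + u := by linarith
  -- D u
  set Iu : ℝ := sInf (F u '' Set.Icc 0 u) with hIu
  have hDu : Phi A S u = min Iu (S u) := rfl
  -- bounds / nonemptiness
  have hne1 : (Set.Icc (0:ℝ) u).Nonempty := ⟨0, le_refl 0, hu⟩
  have hne2 : (Set.Icc u (t + u)).Nonempty := ⟨u, le_refl u, by linarith⟩
  have hne3 : (Set.Icc (0:ℝ) t).Nonempty := ⟨0, le_refl 0, ht⟩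
  have hbd : ∀ v : ℝ, ∀ s : Set ℝ, s ⊆ Set.Icc 0 v → BddBelow (F v '' s) := by
    intro v s hsub
    refine ⟨0, ?_⟩
    rintro _ ⟨x, hx, rfl⟩
    exact hFbd v x (hsub hx)
  -- split the inf for D(t+u)
  have hsplit : Set.Icc (0:ℝ) (t + u) = Set.Icc 0 u ∪ Set.Icc u (t + u) :=
    (Set.Icc_union_Icc_eq_Icc hu (by linarith)).symm
  set J : ℝ := sInf (F (t + u) '' Set.Icc u (t + u)) with hJ
  have hsub1 : Set.Icc (0:ℝ) u ⊆ Set.Icc 0 (t + u) :=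
    Set.Icc_subset_Icc le_rfl (by linarith)
  have hsub2 : Set.Icc u (t + u) ⊆ Set.Icc (0:ℝ) (t + u) :=
    Set.Icc_subset_Icc hu le_rfl
  have hDtu : sInf (F (t + u) '' Set.Icc 0 (t + u))
      = min (sInf (F (t + u) '' Set.Icc 0 u)) J := by
    rw [hsplit, Set.image_union]
    exact csInf_union (hbd _ _ hsub1) (hne1.image _) (hbd _ _ hsub2) (hne2.image _)
  -- first piece: inf over [0,u] equals (S(t+u)-S(u)) + Iu
  have hpiece1 : sInf (F (t + u) '' Set.Icc 0 u) = Iu + (S (t + u) - S u) := by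
    have heq : ∀ x ∈ Set.Icc (0:ℝ) u,
        F (t + u) x = (fun y => y + (S (t + u) - S u)) (F u x) := by
      intro x hx; simp only [hF]; ring
    calc sInf (F (t + u) '' Set.Icc 0 u)
        = sInf ((fun x => (fun y => y + (S (t + u) - S u)) (F u x)) '' Set.Icc 0 u) :=
          csInf_image_eq_of_eqOn _ _ _ heq
      _ = sInf ((fun y => y + (S (t + u) - S u)) '' (F u '' Set.Icc 0 u)) := by
          rw [← Set.image_comp]; rfl
      _ = Iu + (S (t + u) - S u) :=
          csInf_image_add_const _ (hne1.image _) (hbd u _ (le_refl _)) _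
  -- the shifted inf equals J - D(u)
  have hshift : sInf ((fun s => (S (t + u) - S u) - (S (s + u) - S u)
        + (A (s + u) - Phi A S u)) '' Set.Icc 0 t) = J - Phi A S u := by
    have heq : ∀ x ∈ Set.Icc (0:ℝ) t,
        (fun s => (S (t + u) - S u) - (S (s + u) - S u) + (A (s + u) - Phi A S u)) x
          = (fun y => y + (-(Phi A S u))) (F (t + u) (x + u)) := by
      intro x hx; simp only [hF]; ring
    have himg : (fun x => F (t + u) (x + u)) '' Set.Icc (0:ℝ) t
        = F (t + u) '' Set.Icc u (t + u) := by
      rw [show (fun x => F (t + u) (x + u)) = F (t + u) ∘ (fun x => x + u) from rfl,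
        Set.image_comp, Set.image_add_const_Icc]
      norm_num
    calc sInf ((fun s => (S (t + u) - S u) - (S (s + u) - S u)
          + (A (s + u) - Phi A S u)) '' Set.Icc 0 t)
        = sInf ((fun x => (fun y => y + (-(Phi A S u))) (F (t + u) (x + u))) '' Set.Icc 0 t) :=
          csInf_image_eq_of_eqOn _ _ _ heq
      _ = sInf ((fun y => y + (-(Phi A S u))) '' ((fun x => F (t + u) (x + u)) '' Set.Icc 0 t)) := by
          rw [← Set.image_comp]; rfl
      _ = sInf ((fun x => F (t + u) (x + u)) '' Set.Icc 0 t) + (-(Phi A S u)) := by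
          apply csInf_image_add_const _ (hne3.image _)
          rw [himg]; exact hbd _ _ hsub2
      _ = J - Phi A S u := by rw [himg, hJ]; ring
  -- now the final algebra
  show min (sInf ((fun s => (S (t + u) - S u) - (S (s + u) - S u)
        + (A (s + u) - Phi A S u)) '' Set.Icc 0 t)) (S (t + u) - S u)
      = min (sInf (F (t + u) '' Set.Icc 0 (t + u))) (S (t + u)) - Phi A S u
  rw [hshift, hDtu, hpiece1, hDu]
  rcases le_total Iu (S u) with h | h <;> rcases le_total J (Iu + (S (t + u) - S u)) with h2 | h2 <;>
    rcases le_total J (S (t + u)) with h3 | h3 <;>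
    simp [min_def] <;> (try split_ifs) <;> intros <;> linarith
end

section
/- With D = Φ(A,S), for all t ≥ 0 and δ > 0 one has Φ(A,S)(t+δ) - Φ(A,S)(t) ≤ S(t+δ) - S(t). Consequently, for the modulus of continuity w_δ(X,T) := sup_{t∈[0,T]} (X(t+δ) - X(t)), one has w_δ(Φ(A,S), T) ≤ w_δ(S, T). -/
/-- Modulus of continuity `w_δ(X,T) = sup_{t ∈ [0,T]} (X(t+δ) - X(t))`. -/
noncomputable def wmod (X : ℝ → ℝ) (δ T : ℝ) : ℝ :=
  sSup ((fun t => X (t + δ) - X t) '' Set.Icc 0 T)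

lemma Phi_inc_key (A S : ℝ → ℝ) (hA0 : ∀ t, 0 ≤ A t)
    (hS : Monotone S) (t δ : ℝ) (ht : 0 ≤ t) (hδ : 0 ≤ δ) :
    Phi A S (t + δ) - Phi A S t ≤ S (t + δ) - S t := by
  set c := S (t + δ) - S t with hc
  have hc0 : 0 ≤ c := sub_nonneg.2 (hS (by linarith))
  set f : ℝ → ℝ := fun s => S t - S s + A s with hf
  set f' : ℝ → ℝ := fun s => S (t + δ) - S s + A s with hf'
  have hne : (f '' Set.Icc 0 t).Nonempty := ⟨f 0, ⟨0, ⟨le_refl _, ht⟩, rfl⟩⟩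
  have hbdd' : BddBelow (f' '' Set.Icc 0 (t + δ)) := by
    refine ⟨0, ?_⟩
    rintro x ⟨s, hs, rfl⟩
    have : S s ≤ S (t + δ) := hS hs.2
    have := hA0 s
    simp only [hf']
    linarith
  have key : sInf (f' '' Set.Icc 0 (t + δ)) ≤ sInf (f '' Set.Icc 0 t) + c := by
    have h2 : sInf (f' '' Set.Icc 0 (t + δ)) - c ≤ sInf (f '' Set.Icc 0 t) := by
      apply le_csInf hne
      rintro x ⟨s, hs, rfl⟩
      have hmem : f' s ∈ f' '' Set.Icc 0 (t + δ) :=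
        ⟨s, ⟨hs.1, by linarith [hs.2]⟩, rfl⟩
      have h1 : sInf (f' '' Set.Icc 0 (t + δ)) ≤ f' s := csInf_le hbdd' hmem
      have : f' s = f s + c := by simp only [hf, hf', hc]; ring
      linarith
    linarith
  have hSle : S (t + δ) = S t + c := by simp [hc]
  have : Phi A S (t + δ) ≤ Phi A S t + c := by
    unfold Phi
    have h1 : min (sInf (f' '' Set.Icc 0 (t + δ))) (S (t + δ))
        ≤ min (sInf (f '' Set.Icc 0 t) + c) (S t + c) :=
      min_le_min key (le_of_eq hSle)
    calc min (sInf ((fun s => S (t + δ) - S s + A s) '' Set.Icc 0 (t + δ))) (S (t + δ))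
        ≤ min (sInf (f '' Set.Icc 0 t) + c) (S t + c) := h1
      _ = min (sInf (f '' Set.Icc 0 t)) (S t) + c := by
          rcases le_total (sInf (f '' Set.Icc 0 t)) (S t) with h | h
          · rw [min_eq_left h, min_eq_left (by linarith)]
          · rw [min_eq_right h, min_eq_right (by linarith)]
  linarith

/-- `Φ(A,S)(t+δ) - Φ(A,S)(t) ≤ S(t+δ) - S(t)`, hence
`w_δ(Φ(A,S),T) ≤ w_δ(S,T)`. -/
theorem Phi_increment_le (A S : ℝ → ℝ) (hA : Monotone A) (hA0 : ∀ t, 0 ≤ A t)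
    (hS : Monotone S) (hS0 : ∀ t, 0 ≤ S t) (hSz : S 0 = 0) :
    (∀ t ≥ (0 : ℝ), ∀ δ > (0 : ℝ),
      Phi A S (t + δ) - Phi A S t ≤ S (t + δ) - S t) ∧
    (∀ T ≥ (0 : ℝ), ∀ δ > (0 : ℝ), wmod (Phi A S) δ T ≤ wmod S δ T) := by
  constructor
  · intro t ht δ hδ
    exact Phi_inc_key A S hA0 hS t δ ht hδ.le
  · intro T hT δ hδ
    unfold wmod
    have hbdd : BddAbove ((fun t => S (t + δ) - S t) '' Set.Icc 0 T) := by
      refine ⟨S (T + δ), ?_⟩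
      rintro x ⟨s, hs, rfl⟩
      have h1 : S (s + δ) ≤ S (T + δ) := hS (by linarith [hs.2])
      have h2 := hS0 s
      simp only
      linarith
    refine csSup_le ⟨_, ⟨0, ⟨le_refl _, hT⟩, rfl⟩⟩ ?_
    rintro x ⟨s, hs, rfl⟩
    simp only
    have h1 : Phi A S (s + δ) - Phi A S s ≤ S (s + δ) - S s :=
      Phi_inc_key A S hA0 hS s δ hs.1 hδ.le
    have h2 : S (s + δ) - S s ≤ sSup ((fun t => S (t + δ) - S t) '' Set.Icc 0 T) :=
      le_csSup hbdd ⟨s, hs, rfl⟩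
    linarith
end

section
/- If S : [0,∞) → ℝ₊ is absolutely continuous (non-decreasing, S(0)=0), then for any cadlag non-decreasing A : [0,∞) → ℝ₊, the function D := Φ(A,S) is absolutely continuous. Moreover: (i) at any differentiability point t with A(t) > D(t), one has D'(t) = S'(t); (ii) if A(t) = D(t) for all t in an open interval (u,v), then at differentiability points t ∈ (u,v) one has S'(t) ≥ A'(t) = D'(t). -/
open Set Filter

/-- Absolute continuity (on `[0,∞)`) of a real function, via finite families of
non-overlapping intervals. -/
def AbsContOn (f : ℝ → ℝ) : Prop :=
  ∀ ε > (0 : ℝ), ∃ δ > (0 : ℝ), ∀ (m : ℕ) (a b : Fin m → ℝ),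
    (∀ k, 0 ≤ a k ∧ a k ≤ b k) →
    (∀ k l, k ≠ l → Set.Ioo (a k) (b k) ∩ Set.Ioo (a l) (b l) = ∅) →
    (∑ k, (b k - a k)) < δ → (∑ k, |f (b k) - f (a k)|) < ε

section helpers

variable {A S : ℝ → ℝ}

lemma phi_bdd (hA0 : ∀ t, 0 ≤ A t) (hS : Monotone S) (t : ℝ) :
    BddBelow ((fun s => S t - S s + A s) '' Set.Icc 0 t) := by
  refine ⟨0, ?_⟩
  rintro x ⟨s, hs, rfl⟩
  have h1 := hS hs.2
  have h2 := hA0 s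
  dsimp only
  linarith

lemma Phi_le_elem (hA0 : ∀ t, 0 ≤ A t) (hS : Monotone S) {t s : ℝ}
    (hs : s ∈ Set.Icc 0 t) : Phi A S t ≤ S t - S s + A s :=
  (min_le_left _ _).trans (csInf_le (phi_bdd hA0 hS t) ⟨s, hs, rfl⟩)

lemma Phi_le_S (t : ℝ) : Phi A S t ≤ S t := min_le_right _ _

lemma le_Phi {t c : ℝ} (ht : 0 ≤ t)
    (h1 : ∀ s ∈ Set.Icc 0 t, c ≤ S t - S s + A s) (h2 : c ≤ S t) :
    c ≤ Phi A S t :=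
  le_min (le_csInf ⟨_, ⟨0, ⟨le_refl 0, ht⟩, rfl⟩⟩
    (by rintro x ⟨s, hs, rfl⟩; exact h1 s hs)) h2

lemma Phi_lip (hA : Monotone A) (hA0 : ∀ t, 0 ≤ A t) (hS : Monotone S)
    {a b : ℝ} (ha : 0 ≤ a) (hab : a ≤ b) :
    Phi A S b ≤ Phi A S a + (S b - S a) ∧ Phi A S a ≤ Phi A S b + (S b - S a) := by
  have hSab : S a ≤ S b := hS hab
  constructor
  · have : Phi A S b - (S b - S a) ≤ Phi A S a := by
      refine le_Phi ha (fun s hs => ?_) ?_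
      · have := Phi_le_elem hA0 hS (t := b) (s := s) ⟨hs.1, hs.2.trans hab⟩
        linarith
      · have := Phi_le_S (A := A) (S := S) b
        linarith
    linarith
  · have : Phi A S a - (S b - S a) ≤ Phi A S b := by
      refine le_Phi (ha.trans hab) (fun s hs => ?_) ?_
      · rcases le_or_gt s a with h | h
        · have := Phi_le_elem hA0 hS (t := a) (s := s) ⟨hs.1, h⟩
          linarith
        · have h1 : Phi A S a ≤ A a := by
            have := Phi_le_elem hA0 hS (t := a) (s := a) ⟨ha, le_refl a⟩
            linarith
          have h2 : A a ≤ A s := hA h.le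
          have h3 : S s ≤ S b := hS hs.2
          linarith
      · have := Phi_le_S (A := A) (S := S) a
        linarith
    linarith

end helpers

/-- If `S` is absolutely continuous then `D = Φ(A,S)` is absolutely continuous;
where `A > D` one has `D' = S'`, and on open intervals where `A = D` one has
`S' ≥ A' = D'`. -/
theorem Phi_absolutelyContinuous (A S : ℝ → ℝ)
    (hA : Monotone A) (hA0 : ∀ t, 0 ≤ A t)
    (hS : Monotone S) (hS0 : ∀ t, 0 ≤ S t) (hSz : S 0 = 0)
    (hSac : AbsContOn S) :
    AbsContOn (Phi A S) ∧
    (∀ t ≥ (0 : ℝ), ∀ dD dS : ℝ, HasDerivAt (Phi A S) dD t → HasDerivAt S dS t →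
      Phi A S t < A t → dD = dS) ∧
    (∀ u v : ℝ, 0 ≤ u → u < v → (∀ t ∈ Set.Ioo u v, A t = Phi A S t) →
      ∀ t ∈ Set.Ioo u v, ∀ dA dD dS : ℝ,
        HasDerivAt A dA t → HasDerivAt (Phi A S) dD t → HasDerivAt S dS t →
        dA = dD ∧ dA ≤ dS) := by
  refine ⟨?_, ?_, ?_⟩
  · -- absolute continuity
    intro ε hε
    obtain ⟨δ, hδ, hδ'⟩ := hSac ε hε
    refine ⟨δ, hδ, fun m a b hab hdisj hsum => ?_⟩
    have key : ∀ k, |Phi A S (b k) - Phi A S (a k)| ≤ |S (b k) - S (a k)| := by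
      intro k
      obtain ⟨h1, h2⟩ := Phi_lip hA hA0 hS (hab k).1 (hab k).2
      have hSle : S (a k) ≤ S (b k) := hS (hab k).2
      rw [abs_le, abs_of_nonneg (by linarith)]
      constructor <;> linarith
    calc ∑ k, |Phi A S (b k) - Phi A S (a k)| ≤ ∑ k, |S (b k) - S (a k)| :=
          Finset.sum_le_sum fun k _ => key k
      _ < ε := hδ' m a b hab hdisj hsum
  · -- D' = S' where D < A
    intro t ht dD dS hD hS' hlt
    have hScont : ContinuousAt S t := hS'.continuousAt
    obtain ⟨δ, hδpos, hδ⟩ := Metric.continuousAt_iff.mp hScont (A t - Phi A S t) (by linarith)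
    -- on [t, t+δ), Phi x = Phi t + (S x - S t)
    have hconst : ∀ x ∈ Set.Ioo t (t + δ), Phi A S x = Phi A S t + (S x - S t) := by
      intro x hx
      have hxt : t ≤ x := hx.1.le
      have hSd : S x - S t < A t - Phi A S t := by
        have : dist x t < δ := by
          rw [Real.dist_eq, abs_of_nonneg (by linarith [hx.1.le])]
          linarith [hx.2]
        have := hδ this
        rw [Real.dist_eq] at this
        calc S x - S t ≤ |S x - S t| := le_abs_self _
          _ < _ := this
      have h1 : Phi A S x ≤ Phi A S t + (S x - S t) := (Phi_lip hA hA0 hS ht hxt).1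
      have h2 : Phi A S t + (S x - S t) ≤ Phi A S x := by
        refine le_Phi (ht.trans hxt) (fun s hs => ?_) ?_
        · rcases le_or_gt s t with h | h
          · have := Phi_le_elem hA0 hS (t := t) (s := s) ⟨hs.1, h⟩
            linarith
          · have hA1 : A t ≤ A s := hA h.le
            have hS1 : S s ≤ S x := hS hs.2
            linarith
        · have := Phi_le_S (A := A) (S := S) t
          have := hS hxt
          linarith
      linarith
    -- slope argument on g = Phi - S
    have hg : HasDerivAt (fun x => Phi A S x - S x) (dD - dS) t := hD.sub hS'
    have h1 : Tendsto (slope (fun x => Phi A S x - S x) t) (nhdsWithin t (Set.Ioi t))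
        (nhds (dD - dS)) := by
      have := hasDerivAt_iff_tendsto_slope.mp hg
      exact this.mono_left (nhdsWithin_mono _ fun x hx => ne_of_gt (Set.mem_Ioi.mp hx))
    have h2 : slope (fun x => Phi A S x - S x) t =ᶠ[nhdsWithin t (Set.Ioi t)] fun _ => 0 := by
      filter_upwards [Ioo_mem_nhdsGT_of_mem (show t ∈ Set.Ico t (t + δ) from ⟨le_refl t, by linarith⟩)] with x hx
      rw [slope_def_field, hconst x hx]
      ring
    have h3 : Tendsto (fun _ : ℝ => (0 : ℝ)) (nhdsWithin t (Set.Ioi t)) (nhds (dD - dS)) :=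
      h1.congr' h2
    have : dD - dS = 0 := tendsto_nhds_unique h3 tendsto_const_nhds
    linarith
  · -- on intervals where A = D
    intro u v hu huv hAeq t ht dA dD dS hA' hD hS'
    have htu : 0 ≤ t := hu.trans ht.1.le
    have heq : A =ᶠ[nhds t] Phi A S :=
      eventually_of_mem (isOpen_Ioo.mem_nhds ht) hAeq
    have hdAdD : dA = dD := hA'.unique (hD.congr_of_eventuallyEq heq)
    refine ⟨hdAdD, ?_⟩
    -- slope argument on g = S - A
    have hg : HasDerivAt (fun x => S x - A x) (dS - dA) t := hS'.sub hA'
    have h1 : Tendsto (slope (fun x => S x - A x) t) (nhdsWithin t (Set.Ioi t))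
        (nhds (dS - dA)) := by
      have := hasDerivAt_iff_tendsto_slope.mp hg
      exact this.mono_left (nhdsWithin_mono _ fun x hx => ne_of_gt (Set.mem_Ioi.mp hx))
    have h2 : ∀ᶠ x in nhdsWithin t (Set.Ioi t),
        0 ≤ slope (fun x => S x - A x) t x := by
      filter_upwards [Ioo_mem_nhdsGT_of_mem (show t ∈ Set.Ico t v from ⟨le_refl t, ht.2⟩)] with x hx
      have hxIoo : x ∈ Set.Ioo u v := ⟨ht.1.trans hx.1, hx.2⟩
      have h3 : A x = Phi A S x := hAeq x hxIoo
      have h4 : Phi A S x ≤ S x - S t + A t :=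
        Phi_le_elem hA0 hS ⟨htu, hx.1.le⟩
      rw [slope_def_field]
      apply div_nonneg _ (by linarith [hx.1])
      linarith
    have : 0 ≤ dS - dA := ge_of_tendsto h1 h2
    linarith
end

section
/- Let R be a K×K substochastic matrix (nonnegative entries, row sums at most 1) with spectral radius ρ(R) < 1, and let P be a K×K substochastic matrix whose support is contained in the support of R (i.e. R(i,j) = 0 implies P(i,j) = 0). Then for any vector ε with 0 < ε(i) ≤ 1 for all i, the matrix M with entries M(i,j) = (1 - ε(i))·P(i,j) + ε(i)·R(i,j) has spectral radius strictly less than 1. -/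
open Matrix Finset Polynomial

namespace SpecAux

variable {K : ℕ}

lemma pow_entry_nonneg (A : Matrix (Fin K) (Fin K) ℝ) (h : ∀ i j, 0 ≤ A i j) :
    ∀ (m : ℕ) (i j), 0 ≤ (A ^ m) i j := by
  intro m
  induction m with
  | zero =>
      intro i j
      rw [pow_zero]
      rcases eq_or_ne i j with rfl | hne
      · simp [Matrix.one_apply_eq]
      · simp [Matrix.one_apply_ne hne]
  | succ n ih =>
      intro i j
      rw [pow_succ, Matrix.mul_apply]
      exact Finset.sum_nonneg fun k _ => mul_nonneg (ih i k) (h k j)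

lemma rowsum_pow_succ (A : Matrix (Fin K) (Fin K) ℝ) (m : ℕ) (i : Fin K) :
    ∑ j, (A ^ (m + 1)) i j = ∑ k, (A ^ m) i k * ∑ j, A k j := by
  rw [pow_succ]
  simp only [Matrix.mul_apply]
  rw [Finset.sum_comm]
  simp [Finset.mul_sum]

lemma pow_pos_mono (A B : Matrix (Fin K) (Fin K) ℝ) (hA : ∀ i j, 0 ≤ A i j)
    (hB : ∀ i j, 0 ≤ B i j) (h : ∀ i j, 0 < A i j → 0 < B i j) :
    ∀ (m : ℕ) (i j), 0 < (A ^ m) i j → 0 < (B ^ m) i j := by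
  intro m
  induction m with
  | zero =>
      intro i j
      rw [pow_zero, pow_zero]
      rcases eq_or_ne i j with rfl | hne
      · simp [Matrix.one_apply_eq]
      · simp [Matrix.one_apply_ne hne]
  | succ n ih =>
      intro i j hpos
      rw [pow_succ, Matrix.mul_apply] at hpos ⊢
      obtain ⟨k, -, hk⟩ := Finset.exists_lt_of_sum_lt
        (show ∑ _k : Fin K, (0 : ℝ) < ∑ l, (A ^ n) i l * A l j by simpa using hpos)
      have h1 : 0 < (A ^ n) i k ∧ 0 < A k j := by
        rcases mul_pos_iff.mp hk with h' | ⟨h1, _⟩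
        · exact h'
        · exact absurd (pow_entry_nonneg A hA n i k) (not_le.mpr h1)
      calc (0 : ℝ) < (B ^ n) i k * B k j := mul_pos (ih i k h1.1) (h k j h1.2)
        _ ≤ ∑ l, (B ^ n) i l * B l j :=
            Finset.single_le_sum
              (fun l _ => mul_nonneg (pow_entry_nonneg B hB n i l) (hB l j))
              (Finset.mem_univ k)

lemma eval_charpoly_eq {n : Type*} [Fintype n] [DecidableEq n] {R : Type*} [CommRing R]
    (M : Matrix n n R) (t : R) :
    (Matrix.charpoly M).eval t
      = (Matrix.of fun i j => (if i = j then t else 0) - M i j).det := by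
  rw [Matrix.charpoly, ← Polynomial.coe_evalRingHom, RingHom.map_det]
  congr 1
  ext i j
  simp only [RingHom.mapMatrix_apply, Matrix.map_apply, Matrix.charmatrix_apply,
    Matrix.of_apply, coe_evalRingHom, Matrix.sub_apply, Matrix.diagonal_apply]
  rcases eq_or_ne i j with rfl | h
  · simp
  · simp [h]

end SpecAux

open SpecAux

/-- The spectral radius of a real matrix is `< 1`: every complex eigenvalue
(root of the characteristic polynomial over `ℂ`) has modulus `< 1`. -/
def SpecRadiusLtOne {K : ℕ} (M : Matrix (Fin K) (Fin K) ℝ) : Prop :=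
  ∀ z : ℂ, (Matrix.charpoly (M.map (fun x => (x : ℂ)))).IsRoot z → ‖z‖ < 1

/-- For substochastic `R` with `ρ(R) < 1` and `P` substochastic with support
contained in that of `R`, the convex row-combination
`M(i,j) = (1-ε(i)) P(i,j) + ε(i) R(i,j)` (with `0 < ε(i) ≤ 1`) has `ρ(M) < 1`. -/
theorem specRadius_convex_combination (K : ℕ) (R P : Matrix (Fin K) (Fin K) ℝ)
    (hR0 : ∀ i j, 0 ≤ R i j) (hR1 : ∀ i, ∑ j, R i j ≤ 1)
    (hP0 : ∀ i j, 0 ≤ P i j) (hP1 : ∀ i, ∑ j, P i j ≤ 1)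
    (hρ : SpecRadiusLtOne R)
    (hsupp : ∀ i j, R i j = 0 → P i j = 0)
    (ε : Fin K → ℝ) (hε : ∀ i, 0 < ε i ∧ ε i ≤ 1) :
    SpecRadiusLtOne (Matrix.of fun i j => (1 - ε i) * P i j + ε i * R i j) := by
  classical
  intro z hz
  rcases Nat.eq_zero_or_pos K with hK | hK
  · subst hK
    simp [Matrix.charpoly, Matrix.det_isEmpty, Polynomial.IsRoot] at hz
  set M : Matrix (Fin K) (Fin K) ℝ :=
    Matrix.of fun i j => (1 - ε i) * P i j + ε i * R i j with hMdef
  have hM_apply : ∀ i j, M i j = (1 - ε i) * P i j + ε i * R i j := fun i j => rfl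
  have hε0 : ∀ i, 0 < ε i := fun i => (hε i).1
  have hε1 : ∀ i, ε i ≤ 1 := fun i => (hε i).2
  have hM0 : ∀ i j, 0 ≤ M i j := fun i j =>
    add_nonneg (mul_nonneg (by linarith [hε1 i]) (hP0 i j))
      (mul_nonneg (hε0 i).le (hR0 i j))
  have hMrow : ∀ i, ∑ j, M i j = (1 - ε i) * ∑ j, P i j + ε i * ∑ j, R i j := by
    intro i
    simp only [hM_apply, Finset.sum_add_distrib, Finset.mul_sum]
  have hM1 : ∀ i, ∑ j, M i j ≤ 1 := by
    intro i
    rw [hMrow i]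
    nlinarith [hP1 i, hR1 i, hε0 i, hε1 i]
  have hMlt : ∀ i, ∑ j, R i j < 1 → ∑ j, M i j < 1 := by
    intro i h
    rw [hMrow i]
    nlinarith [hP1 i, hε0 i, hε1 i]
  have hRM : ∀ i j, 0 < R i j → 0 < M i j := by
    intro i j h
    have h1 : 0 ≤ (1 - ε i) * P i j := mul_nonneg (by linarith [hε1 i]) (hP0 i j)
    have h2 : 0 < ε i * R i j := mul_pos (hε0 i) h
    rw [hM_apply]; linarith
  -- Step 1: every row of R eventually reaches a deficient row.
  have step1 : ∀ i, ∃ m, 0 < ∑ j, (R ^ m) i j * (1 - ∑ k, R j k) := by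
    intro i
    by_contra hcon
    push_neg at hcon
    have hterm : ∀ m j, (R ^ m) i j * (1 - ∑ k, R j k) = 0 := by
      intro m j
      have hnn : ∀ j' ∈ Finset.univ, (0:ℝ) ≤ (R ^ m) i j' * (1 - ∑ k, R j' k) :=
        fun j' _ => mul_nonneg (pow_entry_nonneg R hR0 m i j') (by linarith [hR1 j'])
      have hsum0 : ∑ j', (R ^ m) i j' * (1 - ∑ k, R j' k) = 0 :=
        le_antisymm (hcon m) (Finset.sum_nonneg hnn)
      exact (Finset.sum_eq_zero_iff_of_nonneg hnn).mp hsum0 j (Finset.mem_univ j)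
    set S : Fin K → Prop := fun j => ∃ m, 0 < (R ^ m) i j with hSdef
    have hiS : S i := ⟨0, by rw [pow_zero]; simp [Matrix.one_apply_eq]⟩
    have hfull : ∀ j, S j → ∑ k, R j k = 1 := by
      rintro j ⟨m, hm⟩
      rcases mul_eq_zero.mp (hterm m j) with h | h
      · exact absurd h hm.ne'
      · linarith
    have hclosed : ∀ j k, S j → 0 < R j k → S k := by
      rintro j k ⟨m, hm⟩ hjk
      refine ⟨m + 1, ?_⟩
      rw [pow_succ, Matrix.mul_apply]
      calc (0:ℝ) < (R ^ m) i j * R j k := mul_pos hm hjk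
        _ ≤ ∑ l, (R ^ m) i l * R l k :=
            Finset.single_le_sum
              (fun l _ => mul_nonneg (pow_entry_nonneg R hR0 m i l) (hR0 l k))
              (Finset.mem_univ j)
    have hclosed' : ∀ j k, S j → ¬ S k → R j k = 0 := by
      intro j k hj hk
      by_contra hne
      exact hk (hclosed j k hj (lt_of_le_of_ne (hR0 j k) (Ne.symm hne)))
    -- det (1 - R) = 0
    have hdet : ((1 : Matrix (Fin K) (Fin K) ℝ) - R).det = 0 := by
      have hzero : ∀ j, S j → ∀ k, ¬ S k → ((1 : Matrix (Fin K) (Fin K) ℝ) - R) j k = 0 := by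
        intro j hj k hk
        have hne : j ≠ k := fun h => hk (h ▸ hj)
        simp [Matrix.sub_apply, Matrix.one_apply_ne hne, hclosed' j k hj hk]
      rw [Matrix.twoBlockTriangular_det' _ S hzero]
      have hb0 : (Matrix.toSquareBlockProp ((1 : Matrix (Fin K) (Fin K) ℝ) - R) S).det = 0 := by
        rw [← Matrix.exists_mulVec_eq_zero_iff]
        refine ⟨fun _ => 1, fun h => one_ne_zero (congrFun h ⟨i, hiS⟩), ?_⟩
        funext jj
        obtain ⟨j, hj⟩ := jj
        show ∑ k : {a // S a},
            ((1 : Matrix (Fin K) (Fin K) ℝ) - R) j (k : Fin K) * 1 = 0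
        have hsub : ∑ k : {a // S a}, ((1 : Matrix (Fin K) (Fin K) ℝ) - R) j (k : Fin K)
            = ∑ k ∈ Finset.univ.filter S, ((1 : Matrix (Fin K) (Fin K) ℝ) - R) j k :=
          (Finset.sum_subtype _ (by simp) _).symm
        have h1 : ∑ k ∈ Finset.univ.filter S, (1 : Matrix (Fin K) (Fin K) ℝ) j k = 1 := by
          simp only [Matrix.one_apply]
          rw [Finset.sum_ite_eq]
          simp [hj]
        have h2 : ∑ k ∈ Finset.univ.filter S, R j k = 1 := by
          rw [Finset.sum_filter_of_ne fun k _ hk =>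
            hclosed j k hj (lt_of_le_of_ne (hR0 j k) (Ne.symm hk))]
          exact hfull j hj
        simp only [mul_one]
        rw [hsub]
        simp only [Matrix.sub_apply, Finset.sum_sub_distrib, h1, h2, sub_self]
      rw [hb0, zero_mul]
    -- so 1 is a root of the (complex) charpoly of R, contradicting hρ.
    have hroot : (Matrix.charpoly R).IsRoot 1 := by
      have hmm : (Matrix.of fun i' j' => (if i' = j' then (1:ℝ) else 0) - R i' j')
          = 1 - R := by
        ext i' j'
        simp [Matrix.one_apply]
      rw [Polynomial.IsRoot, eval_charpoly_eq, hmm]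
      exact hdet
    have hrootC : (Matrix.charpoly (R.map (fun x => (x : ℂ)))).IsRoot 1 := by
      have hmap : R.map (fun x => (x : ℂ)) = R.map (Complex.ofRealHom : ℝ →+* ℂ) := rfl
      rw [hmap, Matrix.charpoly_map]
      simpa using hroot.map (f := (Complex.ofRealHom : ℝ →+* ℂ))
    have hlt := hρ 1 hrootC
    norm_num at hlt
  -- Step 2: transfer to M.
  have step2 : ∀ i, ∃ m, 0 < ∑ j, (M ^ m) i j * (1 - ∑ k, M j k) := by
    intro i
    obtain ⟨m, hm⟩ := step1 i
    refine ⟨m, ?_⟩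
    obtain ⟨j, -, hj⟩ := Finset.exists_lt_of_sum_lt
      (show ∑ _j : Fin K, (0:ℝ) < ∑ j, (R ^ m) i j * (1 - ∑ k, R j k) by simpa using hm)
    have hRpos : 0 < (R ^ m) i j ∧ 0 < 1 - ∑ k, R j k := by
      rcases mul_pos_iff.mp hj with h' | ⟨h1, _⟩
      · exact h'
      · exact absurd (pow_entry_nonneg R hR0 m i j) (not_le.mpr h1)
    have hMpow : 0 < (M ^ m) i j := pow_pos_mono R M hR0 hM0 hRM m i j hRpos.1
    have hMd : 0 < 1 - ∑ k, M j k := by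
      have := hMlt j (by linarith [hRpos.2])
      linarith
    calc (0:ℝ) < (M ^ m) i j * (1 - ∑ k, M j k) := mul_pos hMpow hMd
      _ ≤ ∑ l, (M ^ m) i l * (1 - ∑ k, M l k) :=
          Finset.single_le_sum (f := fun l => (M ^ m) i l * (1 - ∑ k, M l k))
            (fun l _ => mul_nonneg (pow_entry_nonneg M hM0 m i l)
              (by linarith [hM1 l]))
            (Finset.mem_univ j)
  choose m hm using step2
  set N : ℕ := Finset.univ.sup m + 1 with hNdef
  -- row sums of powers of M
  have hstep : ∀ (n : ℕ) (i), ∑ j, (M ^ (n + 1)) i j ≤ ∑ j, (M ^ n) i j := by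
    intro n i
    rw [rowsum_pow_succ]
    calc ∑ k, (M ^ n) i k * ∑ j, M k j ≤ ∑ k, (M ^ n) i k * 1 :=
          Finset.sum_le_sum fun k _ =>
            mul_le_mul_of_nonneg_left (hM1 k) (pow_entry_nonneg M hM0 n i k)
      _ = ∑ j, (M ^ n) i j := by simp
  have hs_le_one : ∀ (n : ℕ) (i), ∑ j, (M ^ n) i j ≤ 1 := by
    intro n
    induction n with
    | zero =>
        intro i
        rw [pow_zero]
        simp only [Matrix.one_apply]
        rw [Finset.sum_ite_eq]
        simp
    | succ n ih => intro i; exact le_trans (hstep n i) (ih i)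
  have hs_anti : ∀ i, Antitone fun n => ∑ j, (M ^ n) i j := fun i =>
    antitone_nat_of_succ_le fun n => hstep n i
  have hdrop : ∀ i, ∑ j, (M ^ (m i + 1)) i j < 1 := by
    intro i
    rw [rowsum_pow_succ]
    have expand : ∑ k, (M ^ m i) i k * ∑ j, M k j
        = ∑ k, (M ^ m i) i k - ∑ k, (M ^ m i) i k * (1 - ∑ j, M k j) := by
      rw [← Finset.sum_sub_distrib]
      exact Finset.sum_congr rfl fun k _ => by ring
    rw [expand]
    have h1 := hs_le_one (m i) i
    have h2 := hm i
    linarith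
  have hN : ∀ i, ∑ j, (M ^ N) i j < 1 := by
    intro i
    have h1 : m i + 1 ≤ N := Nat.succ_le_succ (Finset.le_sup (Finset.mem_univ i))
    exact lt_of_le_of_lt (hs_anti i h1) (hdrop i)
  -- Step 3: eigenvalue bound via row sums of M ^ N.
  rw [Polynomial.IsRoot, eval_charpoly_eq] at hz
  obtain ⟨v, hv, hmv⟩ := Matrix.exists_mulVec_eq_zero_iff.mpr hz
  have heig : ∀ i, ∑ j, ((M i j : ℂ)) * v j = z * v i := by
    intro i
    have h0 := congrFun hmv i
    simp only [Matrix.mulVec, dotProduct, Matrix.of_apply, Pi.zero_apply,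
      sub_mul, Finset.sum_sub_distrib, ite_mul, zero_mul] at h0
    rw [Finset.sum_ite_eq] at h0
    simp only [Finset.mem_univ, if_true, Matrix.map_apply] at h0
    have := sub_eq_zero.mp h0
    rw [← this]
  have hpow : ∀ (n : ℕ) (i), ∑ j, (((M ^ n) i j : ℝ) : ℂ) * v j = z ^ n * v i := by
    intro n
    induction n with
    | zero =>
        intro i
        rw [pow_zero, pow_zero]
        have : ∀ j, (((1 : Matrix (Fin K) (Fin K) ℝ) i j : ℝ) : ℂ) * v j
            = (if i = j then 1 else 0) * v j := by
          intro j
          rcases eq_or_ne i j with rfl | h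
          · simp [Matrix.one_apply_eq]
          · simp [Matrix.one_apply_ne h, h]
        rw [Finset.sum_congr rfl fun j _ => this j]
        simp only [ite_mul, zero_mul]
        rw [Finset.sum_ite_eq]
        simp
    | succ n ih =>
        intro i
        have hexp : ∀ j, (((M ^ (n + 1)) i j : ℝ) : ℂ) * v j
            = ∑ k, ((((M ^ n) i k : ℝ) : ℂ) * (M k j : ℂ)) * v j := by
          intro j
          rw [pow_succ, Matrix.mul_apply]
          push_cast
          rw [Finset.sum_mul]
        rw [Finset.sum_congr rfl fun j _ => hexp j, Finset.sum_comm]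
        have hinner : ∀ k, ∑ j, (((M ^ n) i k : ℝ) : ℂ) * (M k j : ℂ) * v j
            = (((M ^ n) i k : ℝ) : ℂ) * (z * v k) := by
          intro k
          rw [← heig k, Finset.mul_sum]
          exact Finset.sum_congr rfl fun j _ => by ring
        rw [Finset.sum_congr rfl fun k _ => hinner k]
        have : ∑ k, (((M ^ n) i k : ℝ) : ℂ) * (z * v k)
            = z * ∑ k, (((M ^ n) i k : ℝ) : ℂ) * v k := by
          rw [Finset.mul_sum]
          exact Finset.sum_congr rfl fun k _ => by ring
        rw [this, ih i, pow_succ]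
        ring
  obtain ⟨i₀, -, hmax⟩ := Finset.exists_max_image Finset.univ
    (fun i => ‖v i‖) ⟨⟨0, hK⟩, Finset.mem_univ _⟩
  have hvpos : 0 < ‖v i₀‖ := by
    obtain ⟨j, hj⟩ := Function.ne_iff.mp hv
    exact lt_of_lt_of_le (norm_pos_iff.mpr hj) (hmax j (Finset.mem_univ j))
  have key : ‖z‖ ^ N * ‖v i₀‖ < 1 * ‖v i₀‖ := by
    have h1 : ‖z‖ ^ N * ‖v i₀‖
        = ‖∑ j, (((M ^ N) i₀ j : ℝ) : ℂ) * v j‖ := by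
      rw [hpow N i₀]
      rw [norm_mul, norm_pow]
    rw [h1]
    calc ‖∑ j, (((M ^ N) i₀ j : ℝ) : ℂ) * v j‖
        ≤ ∑ j, ‖(((M ^ N) i₀ j : ℝ) : ℂ) * v j‖ :=
          norm_sum_le _ _
      _ = ∑ j, (M ^ N) i₀ j * ‖v j‖ := by
          refine Finset.sum_congr rfl fun j _ => ?_
          rw [norm_mul, Complex.norm_real, Real.norm_eq_abs, abs_of_nonneg (pow_entry_nonneg M hM0 N i₀ j)]
      _ ≤ ∑ j, (M ^ N) i₀ j * ‖v i₀‖ :=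
          Finset.sum_le_sum fun j _ =>
            mul_le_mul_of_nonneg_left (hmax j (Finset.mem_univ j))
              (pow_entry_nonneg M hM0 N i₀ j)
      _ = (∑ j, (M ^ N) i₀ j) * ‖v i₀‖ := by rw [Finset.sum_mul]
      _ < 1 * ‖v i₀‖ := by
          exact mul_lt_mul_of_pos_right (hN i₀) hvpos
  have hzN : ‖z‖ ^ N < 1 := by
    have := lt_of_mul_lt_mul_right key hvpos.le
    linarith
  by_contra hcon
  push_neg at hcon
  have : (1 : ℝ) ≤ ‖z‖ ^ N := one_le_pow₀ hcon
  linarith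
end

section
/- Let P be a K×K substochastic matrix with spectral radius ρ(P) < 1 and let α, y ∈ ℝ₊^K. Then the fixed point equation x(i) = α(i) + Σ_{j=1}^K P(j,i) · (x(j) ∧ y(j)) has a unique solution x = x(y,P,α) ∈ ℝ₊^K. Moreover, the map (y,α) ↦ x(y,P,α) is continuous and non-decreasing (componentwise, for the componentwise partial order). -/
open Filter Function Matrix Topology

attribute [local instance] Matrix.linftyOpNormedRing Matrix.linftyOpNormedAlgebra

lemma isRoot_of_mem_spectrum {K : ℕ} (M : Matrix (Fin K) (Fin K) ℂ) {z : ℂ}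
    (hz : z ∈ spectrum ℂ M) : M.charpoly.IsRoot z := by
  rw [spectrum.mem_iff] at hz
  rw [Matrix.algebraMap_eq_diagonal] at hz
  have hdet : (Matrix.diagonal (fun _ : Fin K => z) - M).det = 0 := by
    by_contra h
    refine hz ?_
    have : IsUnit (Matrix.diagonal (fun _ : Fin K => z) - M) :=
      (Matrix.isUnit_iff_isUnit_det _).2 (isUnit_iff_ne_zero.2 h)
    convert this using 2
    rfl
  have key : M.charpoly.eval z = (Matrix.diagonal (fun _ : Fin K => z) - M).det := by
    rw [Matrix.charpoly, ← Polynomial.coe_evalRingHom, RingHom.map_det]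
    congr 1
    ext i j
    by_cases hij : i = j
    · subst hij
      simp [RingHom.mapMatrix_apply, Matrix.charmatrix_apply_eq]
    · simp [RingHom.mapMatrix_apply, Matrix.charmatrix_apply_ne _ _ _ hij,
        Matrix.diagonal_apply_ne _ hij]
  rwa [Polynomial.IsRoot, key]

lemma entry_abs_le_linfty_norm {K : ℕ} (A : Matrix (Fin K) (Fin K) ℂ) (i j : Fin K) :
    ‖A i j‖ ≤ ‖A‖ := by
  have h : ‖A i j‖₊ ≤ ‖A‖₊ := by
    rw [Matrix.linfty_opNNNorm_def]
    exact le_trans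
      (Finset.single_le_sum (f := fun j' => ‖A i j'‖₊) (fun _ _ => by positivity)
        (Finset.mem_univ j))
      (Finset.le_sup (f := fun i => ∑ j : Fin K, ‖A i j‖₊) (Finset.mem_univ i))
  calc ‖A i j‖ = ‖A i j‖ := rfl
    _ ≤ ‖A‖ := h

lemma exists_pow_colsum_lt {K : ℕ} (P : Matrix (Fin K) (Fin K) ℝ)
    (hρ : SpecRadiusLtOne P) :
    ∃ c : ℝ, 0 ≤ c ∧ c < 1 ∧ ∃ L : ℕ, ∀ i, ∑ j, |(P ^ L) j i| ≤ c := by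
  rcases Nat.eq_zero_or_pos K with hK | hK
  · subst hK
    exact ⟨0, le_refl _, by norm_num, 1, fun i => i.elim0⟩
  haveI : NeZero K := ⟨hK.ne'⟩
  haveI : Nontrivial (Matrix (Fin K) (Fin K) ℂ) :=
    inferInstanceAs (Nontrivial (Fin K → Fin K → ℂ))
  set M : Matrix (Fin K) (Fin K) ℂ := P.map (fun x => (x : ℂ)) with hM
  have hsr : spectralRadius ℂ M < 1 := by
    have := spectrum.spectralRadius_lt_of_forall_lt M (r := 1) (fun z hz => by
      have hroot := isRoot_of_mem_spectrum M hz
      have := hρ z hroot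
      rwa [← NNReal.coe_lt_coe, coe_nnnorm, NNReal.coe_one])
    simpa using this
  have hG := spectrum.pow_nnnorm_pow_one_div_tendsto_nhds_spectralRadius M
  have hev : ∀ᶠ n : ℕ in atTop, ((‖M ^ n‖₊ : ENNReal) ^ (1/(n:ℝ))) < 1 :=
    hG.eventually_lt_const hsr
  obtain ⟨N, hN1, hNlt⟩ : ∃ N : ℕ, 1 ≤ N ∧ ((‖M ^ N‖₊ : ENNReal) ^ (1/(N:ℝ))) < 1 := by
    rcases (hev.and (eventually_ge_atTop 1)).exists with ⟨N, h1, h2⟩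
    exact ⟨N, h2, h1⟩
  have hMN : ‖M ^ N‖ < 1 := by
    by_contra h
    push_neg at h
    have h1 : (1 : ENNReal) ≤ (‖M ^ N‖₊ : ENNReal) := by
      rw [ENNReal.one_le_coe_iff]
      exact_mod_cast h
    have : (1 : ENNReal) ≤ ((‖M ^ N‖₊ : ENNReal) ^ (1/(N:ℝ))) := by
      calc (1 : ENNReal) = 1 ^ (1/(N:ℝ)) := (ENNReal.one_rpow _).symm
        _ ≤ _ := ENNReal.rpow_le_rpow h1 (by positivity)
    exact absurd hNlt this.not_gt
  have hr0 : (0:ℝ) ≤ ‖M ^ N‖ := norm_nonneg _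
  obtain ⟨m, hm⟩ : ∃ m : ℕ, ‖M ^ N‖ ^ m < 1 / K :=
    exists_pow_lt_of_lt_one (by positivity) hMN
  have hrm : (K : ℝ) * ‖M ^ N‖ ^ (m+1) < 1 := by
    have h1 : ‖M ^ N‖ ^ (m+1) ≤ ‖M ^ N‖ ^ m :=
      pow_le_pow_of_le_one hr0 hMN.le (Nat.le_succ m)
    have h2 : (K:ℝ) * ‖M ^ N‖ ^ m < 1 := by
      rw [lt_div_iff₀ (by positivity : (0:ℝ) < K)] at hm
      linarith [hm]
    nlinarith [mul_le_mul_of_nonneg_left h1 (by positivity : (0:ℝ) ≤ K)]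
  refine ⟨(K : ℝ) * ‖M ^ N‖ ^ (m+1), by positivity, hrm, N * (m+1), fun i => ?_⟩
  have hmap : (P ^ (N*(m+1))).map (fun x => (x : ℂ)) = M ^ (N*(m+1)) := by
    have h := map_pow (Complex.ofRealHom.mapMatrix) P (N*(m+1))
    simp only [RingHom.mapMatrix_apply] at h
    rw [hM]
    exact h
  have hnorm : ‖M ^ (N*(m+1))‖ ≤ ‖M ^ N‖ ^ (m+1) := by
    rw [pow_mul]
    exact norm_pow_le' (M ^ N) (Nat.succ_pos m)
  have hentry : ∀ j, |(P ^ (N*(m+1))) j i| ≤ ‖M ^ N‖ ^ (m+1) := by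
    intro j
    have h1 : ‖((M ^ (N*(m+1))) j i)‖ ≤ ‖M ^ (N*(m+1))‖ :=
      entry_abs_le_linfty_norm _ _ _
    have h2 : ((M ^ (N*(m+1))) j i) = ((P ^ (N*(m+1))) j i : ℂ) := by
      rw [← hmap]; rfl
    rw [h2, Complex.norm_real, Real.norm_eq_abs] at h1
    exact h1.trans hnorm
  calc ∑ j, |(P ^ (N*(m+1))) j i| ≤ ∑ _j : Fin K, ‖M ^ N‖ ^ (m+1) :=
        Finset.sum_le_sum (fun j _ => hentry j)
    _ = (K : ℝ) * ‖M ^ N‖ ^ (m+1) := by simp [mul_comm]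

/-- For a substochastic matrix `P` with `ρ(P) < 1` and `α, y ∈ ℝ₊^K`, the equation
`x(i) = α(i) + Σ_j P(j,i) (x(j) ∧ y(j))` has a unique solution `x(y,P,α)`, and the
map `(y,α) ↦ x(y,P,α)` is continuous and non-decreasing. -/
theorem fixedPoint_substochastic (K : ℕ) (P : Matrix (Fin K) (Fin K) ℝ)
    (hP0 : ∀ i j, 0 ≤ P i j) (hP1 : ∀ i, ∑ j, P i j ≤ 1)
    (hρ : SpecRadiusLtOne P) :
    (∀ y α : Fin K → ℝ, (∀ i, 0 ≤ y i) → (∀ i, 0 ≤ α i) →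
      ∃! x : Fin K → ℝ, ∀ i, x i = α i + ∑ j, P j i * min (x j) (y j)) ∧
    ∃ xf : (Fin K → ℝ) → (Fin K → ℝ) → (Fin K → ℝ),
      (∀ y α : Fin K → ℝ, (∀ i, 0 ≤ y i) → (∀ i, 0 ≤ α i) →
        (∀ i, 0 ≤ xf y α i) ∧
        (∀ i, xf y α i = α i + ∑ j, P j i * min (xf y α j) (y j))) ∧
      ContinuousOn (fun p : (Fin K → ℝ) × (Fin K → ℝ) => xf p.1 p.2)
        {p | (∀ i, 0 ≤ p.1 i) ∧ (∀ i, 0 ≤ p.2 i)} ∧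
      MonotoneOn (fun p : (Fin K → ℝ) × (Fin K → ℝ) => xf p.1 p.2)
        {p | (∀ i, 0 ≤ p.1 i) ∧ (∀ i, 0 ≤ p.2 i)} := by
  classical
  obtain ⟨c, hc0, hc1, L, hcol⟩ := exists_pow_colsum_lt P hρ
  have hpow0 : ∀ (m : ℕ) (i j : Fin K), 0 ≤ (P ^ m) i j := by
    intro m
    induction m with
    | zero =>
      intro i j
      by_cases h : i = j <;> simp [Matrix.one_apply, h]
    | succ m ih =>
      intro i j
      rw [pow_succ, Matrix.mul_apply]
      exact Finset.sum_nonneg fun k _ => mul_nonneg (ih i k) (hP0 k j)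
  have hcol' : ∀ i, ∑ j, (P ^ L) j i ≤ c := by
    intro i
    calc ∑ j, (P ^ L) j i = ∑ j, |(P ^ L) j i| :=
          Finset.sum_congr rfl fun j _ => (abs_of_nonneg (hpow0 L j i)).symm
      _ ≤ c := hcol i
  set T : (Fin K → ℝ) → (Fin K → ℝ) → (Fin K → ℝ) → (Fin K → ℝ) :=
    fun y α x i => α i + ∑ j, P j i * min (x j) (y j) with hT
  -- one step bound in x
  have hstep : ∀ y α u v i, |T y α u i - T y α v i| ≤ ∑ j, P j i * |u j - v j| := by
    intro y α u v i
    have h1 : T y α u i - T y α v i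
        = ∑ j, P j i * (min (u j) (y j) - min (v j) (y j)) := by
      simp only [hT]
      rw [add_sub_add_left_eq_sub, ← Finset.sum_sub_distrib]
      exact Finset.sum_congr rfl fun j _ => (mul_sub _ _ _).symm
    rw [h1]
    refine (Finset.abs_sum_le_sum_abs _ _).trans (Finset.sum_le_sum fun j _ => ?_)
    rw [abs_mul, abs_of_nonneg (hP0 j i)]
    refine mul_le_mul_of_nonneg_left ?_ (hP0 j i)
    have := abs_min_sub_min_le_max (u j) (y j) (v j) (y j)
    simpa using this
  -- iterated bound
  have hiter : ∀ y α (m : ℕ) u v i,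
      |((T y α)^[m] u) i - ((T y α)^[m] v) i| ≤ (∑ j, (P ^ m) j i) * dist u v := by
    intro y α m
    induction m with
    | zero =>
      intro u v i
      have h1 : (∑ j, ((P ^ 0) : Matrix (Fin K) (Fin K) ℝ) j i) = 1 := by
        simp [Matrix.one_apply]
      simp only [Function.iterate_zero_apply, h1, one_mul]
      have := dist_le_pi_dist u v i
      rwa [Real.dist_eq] at this
    | succ m ih =>
      intro u v i
      rw [Function.iterate_succ_apply', Function.iterate_succ_apply']
      calc |T y α ((T y α)^[m] u) i - T y α ((T y α)^[m] v) i|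
          ≤ ∑ j, P j i * |((T y α)^[m] u) j - ((T y α)^[m] v) j| := hstep _ _ _ _ _
        _ ≤ ∑ j, P j i * ((∑ k, (P ^ m) k j) * dist u v) :=
            Finset.sum_le_sum fun j _ => mul_le_mul_of_nonneg_left (ih u v j) (hP0 j i)
        _ = ∑ j, (∑ k, (P ^ m) k j * P j i) * dist u v := by
            refine Finset.sum_congr rfl fun j _ => ?_
            rw [show (∑ k, (P ^ m) k j * P j i) = (∑ k, (P ^ m) k j) * P j i from
              (Finset.sum_mul _ _ _).symm]
            ring
        _ = (∑ j, ∑ k, (P ^ m) k j * P j i) * dist u v := (Finset.sum_mul _ _ _).symm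
        _ = (∑ k, (P ^ (m+1)) k i) * dist u v := by
            rw [Finset.sum_comm]
            congr 1
  -- contraction
  set c' : NNReal := ⟨c, hc0⟩ with hc'
  have hc'lt : c' < 1 := by exact_mod_cast hc1
  have hcontr : ∀ y α, ContractingWith c' ((T y α)^[L]) := by
    intro y α
    refine ⟨hc'lt, LipschitzWith.of_dist_le_mul fun u v => ?_⟩
    show dist ((T y α)^[L] u) ((T y α)^[L] v) ≤ c * dist u v
    rw [dist_pi_le_iff (mul_nonneg hc0 dist_nonneg)]
    intro i
    rw [Real.dist_eq]
    exact (hiter y α L u v i).trans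
      (mul_le_mul_of_nonneg_right (hcol' i) dist_nonneg)
  set xf : (Fin K → ℝ) → (Fin K → ℝ) → (Fin K → ℝ) :=
    fun y α => ContractingWith.fixedPoint ((T y α)^[L]) (hcontr y α) with hxf
  have hfix : ∀ y α, T y α (xf y α) = xf y α := fun y α =>
    (hcontr y α).isFixedPt_fixedPoint_iterate
  have huniq : ∀ y α x, T y α x = x → x = xf y α := fun y α x hx =>
    (hcontr y α).fixedPoint_unique (Function.IsFixedPt.iterate hx L)
  have hTmono : ∀ {y α y' α' : Fin K → ℝ} {u v : Fin K → ℝ},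
      y ≤ y' → α ≤ α' → u ≤ v → T y α u ≤ T y' α' v := by
    intro y α y' α' u v hy hα huv i
    refine add_le_add (hα i) (Finset.sum_le_sum fun j _ => ?_)
    exact mul_le_mul_of_nonneg_left (min_le_min (huv j) (hy j)) (hP0 j i)
  have hiter0mono : ∀ {y α y' α' : Fin K → ℝ}, y ≤ y' → α ≤ α' → ∀ k : ℕ,
      (T y α)^[k] 0 ≤ (T y' α')^[k] 0 := by
    intro y α y' α' hy hα k
    induction k with
    | zero => exact le_refl _
    | succ k ih =>
      rw [Function.iterate_succ_apply', Function.iterate_succ_apply']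
      exact hTmono hy hα ih
  have htend : ∀ y α, Tendsto (fun k => (T y α)^[L*k] 0) atTop (𝓝 (xf y α)) := by
    intro y α
    have h := (hcontr y α).tendsto_iterate_fixedPoint 0
    simpa only [Function.iterate_mul] using h
  have hxfmono : ∀ {y α y' α' : Fin K → ℝ}, y ≤ y' → α ≤ α' → xf y α ≤ xf y' α' := by
    intro y α y' α' hy hα
    intro i
    have h1 := tendsto_pi_nhds.mp (htend y α) i
    have h2 := tendsto_pi_nhds.mp (htend y' α') i
    exact le_of_tendsto_of_tendsto' h1 h2 (fun k => hiter0mono hy hα (L*k) i)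
  have hxfnonneg : ∀ y α : Fin K → ℝ, (∀ i, 0 ≤ y i) → (∀ i, 0 ≤ α i) →
      ∀ i, 0 ≤ xf y α i := by
    intro y α hy hα
    have hk : ∀ (k : ℕ) i, 0 ≤ ((T y α)^[k] 0) i := by
      intro k
      induction k with
      | zero => intro i; simp
      | succ k ih =>
        intro i
        rw [Function.iterate_succ_apply']
        refine add_nonneg (hα i) (Finset.sum_nonneg fun j _ =>
          mul_nonneg (hP0 j i) (le_min (ih j) (hy j)))
    intro i
    exact le_of_tendsto_of_tendsto' tendsto_const_nhds
      (tendsto_pi_nhds.mp (htend y α) i) (fun k => hk (L*k) i)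
  -- Lipschitz in parameters
  set B : ℝ := ∑ i, ∑ j, P j i with hB
  have hB0 : 0 ≤ B := Finset.sum_nonneg fun i _ => Finset.sum_nonneg fun j _ => hP0 j i
  have hcolB : ∀ i, ∑ j, P j i ≤ B := fun i =>
    Finset.single_le_sum (f := fun i => ∑ j, P j i)
      (fun i _ => Finset.sum_nonneg fun j _ => hP0 j i) (Finset.mem_univ i)
  have habsle : ∀ (u v : Fin K → ℝ) j, |u j - v j| ≤ dist u v := by
    intro u v j
    have := dist_le_pi_dist u v j
    rwa [Real.dist_eq] at this
  have hLipx : ∀ y α u v, dist (T y α u) (T y α v) ≤ B * dist u v := by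
    intro y α u v
    rw [dist_pi_le_iff (mul_nonneg hB0 dist_nonneg)]
    intro i
    rw [Real.dist_eq]
    calc |T y α u i - T y α v i| ≤ ∑ j, P j i * |u j - v j| := hstep _ _ _ _ _
      _ ≤ ∑ j, P j i * dist u v := Finset.sum_le_sum fun j _ =>
          mul_le_mul_of_nonneg_left (habsle u v j) (hP0 j i)
      _ = (∑ j, P j i) * dist u v := (Finset.sum_mul _ _ _).symm
      _ ≤ B * dist u v := mul_le_mul_of_nonneg_right (hcolB i) dist_nonneg
  have hparam : ∀ y α y' α' x,
      dist (T y α x) (T y' α' x) ≤ dist α α' + B * dist y y' := by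
    intro y α y' α' x
    have hD0 : 0 ≤ dist α α' + B * dist y y' :=
      add_nonneg dist_nonneg (mul_nonneg hB0 dist_nonneg)
    rw [dist_pi_le_iff hD0]
    intro i
    rw [Real.dist_eq]
    have h1 : T y α x i - T y' α' x i
        = (α i - α' i) + ∑ j, P j i * (min (x j) (y j) - min (x j) (y' j)) := by
      simp only [hT]
      rw [add_sub_add_comm, ← Finset.sum_sub_distrib]
      congr 1
      exact Finset.sum_congr rfl fun j _ => (mul_sub _ _ _).symm
    rw [h1]
    refine (abs_add_le _ _).trans (add_le_add (habsle α α' i) ?_)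
    calc |∑ j, P j i * (min (x j) (y j) - min (x j) (y' j))|
        ≤ ∑ j, |P j i * (min (x j) (y j) - min (x j) (y' j))| :=
          Finset.abs_sum_le_sum_abs _ _
      _ ≤ ∑ j, P j i * dist y y' := by
          refine Finset.sum_le_sum fun j _ => ?_
          rw [abs_mul, abs_of_nonneg (hP0 j i)]
          refine mul_le_mul_of_nonneg_left ?_ (hP0 j i)
          refine le_trans ?_ (habsle y y' j)
          have := abs_min_sub_min_le_max (x j) (y j) (x j) (y' j)
          simpa using this
      _ = (∑ j, P j i) * dist y y' := (Finset.sum_mul _ _ _).symm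
      _ ≤ B * dist y y' := mul_le_mul_of_nonneg_right (hcolB i) dist_nonneg
  have hparamIter : ∀ y α y' α' (k : ℕ) x,
      dist ((T y α)^[k] x) ((T y' α')^[k] x)
        ≤ (B+1)^k * (dist α α' + B * dist y y') := by
    intro y α y' α' k x
    have hD0 : 0 ≤ dist α α' + B * dist y y' :=
      add_nonneg dist_nonneg (mul_nonneg hB0 dist_nonneg)
    induction k with
    | zero => simpa using hD0
    | succ k ih =>
      rw [Function.iterate_succ_apply', Function.iterate_succ_apply']
      have h1 : dist (T y α ((T y α)^[k] x)) (T y' α' ((T y' α')^[k] x))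
          ≤ dist (T y α ((T y α)^[k] x)) (T y α ((T y' α')^[k] x))
            + dist (T y α ((T y' α')^[k] x)) (T y' α' ((T y' α')^[k] x)) :=
        dist_triangle _ _ _
      have h2 := hLipx y α ((T y α)^[k] x) ((T y' α')^[k] x)
      have h3 := hparam y α y' α' ((T y' α')^[k] x)
      have h4 : (1:ℝ) ≤ (B+1)^k := one_le_pow₀ (by linarith)
      have h5 : 0 ≤ (B+1)^k := by positivity
      rw [pow_succ]
      nlinarith [mul_le_mul_of_nonneg_left ih hB0, mul_le_mul_of_nonneg_right h4 hD0]
  have hLip : ∀ y α y' α', dist (xf y α) (xf y' α')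
      ≤ ((B+1)^L * (dist α α' + B * dist y y')) / (1 - c') := by
    intro y α y' α'
    exact (hcontr y α).fixedPoint_lipschitz_in_map (hcontr y' α')
      (fun z => hparamIter y α y' α' L z)
  have hcont : Continuous (fun p : (Fin K → ℝ) × (Fin K → ℝ) => xf p.1 p.2) := by
    have hc1' : (0:ℝ) < 1 - c := by linarith
    set Cr : ℝ := ((B+1)^L * (1 + B)) / (1 - c) with hCr
    have hCr0 : 0 ≤ Cr := by positivity
    refine (LipschitzWith.of_dist_le_mul (K := Real.toNNReal Cr) ?_).continuous
    intro p q
    rw [Real.coe_toNNReal Cr hCr0]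
    have h1 := hLip p.1 p.2 q.1 q.2
    have h2 : dist p.2 q.2 ≤ dist p q := by
      rw [Prod.dist_eq]; exact le_max_right _ _
    have h3 : dist p.1 q.1 ≤ dist p q := by
      rw [Prod.dist_eq]; exact le_max_left _ _
    have hcc : ((1 : ℝ) - (c' : ℝ)) = 1 - c := rfl
    have h4 : dist p.2 q.2 + B * dist p.1 q.1 ≤ (1 + B) * dist p q := by
      nlinarith [mul_le_mul_of_nonneg_left h3 hB0]
    calc dist (xf p.1 p.2) (xf q.1 q.2)
        ≤ ((B+1)^L * (dist p.2 q.2 + B * dist p.1 q.1)) / (1 - c) := by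
          rw [← hcc]; exact h1
      _ ≤ ((B+1)^L * ((1 + B) * dist p q)) / (1 - c) := by
          have h5 : (0:ℝ) ≤ (B+1)^L := by positivity
          exact (div_le_div_iff_of_pos_right hc1').mpr (mul_le_mul_of_nonneg_left h4 h5)
      _ = Cr * dist p q := by rw [hCr]; ring
  refine ⟨?_, xf, ?_, hcont.continuousOn, ?_⟩
  · intro y α hy hα
    refine ⟨xf y α, fun i => ?_, fun x hx => huniq y α x (funext fun i => (hx i).symm)⟩
    exact (congrFun (hfix y α) i).symm
  · intro y α hy hα
    exact ⟨hxfnonneg y α hy hα, fun i => (congrFun (hfix y α) i).symm⟩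
  · intro p hp q hq hpq
    exact hxfmono hpq.1 hpq.2
end

section
/- In the setting of the extended contraction principle: if G(x,y) = 0 implies that the set {x' : G(x',y) = 0} is closed (automatic by continuity of G), then the rate function for y, defined as I^{H(X)}(y) := inf{I^X(x) : G(x,y) = 0}, equals inf{I^X(x) : y ∈ H^x}, where H^x := {y ∈ F : there exists x_n → x with x_n ∈ D and H(x_n) → y}. -/
open Filter
open scoped ENNReal

/-- A good rate function: lower semicontinuous with compact sublevel sets. -/
def GoodRate {E : Type*} [TopologicalSpace E] (I : E → ℝ≥0∞) : Prop :=
  LowerSemicontinuous I ∧ ∀ c : ℝ≥0∞, c ≠ ⊤ → IsCompact {x | I x ≤ c}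

/-- In the setting of the extended contraction principle, the rate function
`I^{H(X)}(y) = inf {I^X(x) : G(x,y) = 0}` equals `inf {I^X(x) : y ∈ H^x}` where
`H^x = {y : ∃ x_n → x, x_n ∈ D, H(x_n) → y}`. -/
theorem rate_function_alternative
    {E F : Type*} [MetricSpace E] [CompleteSpace E] [TopologicalSpace.SeparableSpace E]
    [MetricSpace F] [CompleteSpace F] [TopologicalSpace.SeparableSpace F]
    (G : E × F → ℝ) (hG : Continuous G)
    (D : Set E) (H : E → F)
    (hH : ∀ x ∈ D, G (x, H x) = 0 ∧ ∀ y : F, G (x, y) = 0 → y = H x)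
    (IX : E → ℝ≥0∞) (hIX : GoodRate IX)
    (happrox : ∀ x y, G (x, y) = 0 → IX x ≠ ⊤ →
      ∃ xs : ℕ → E, (∀ n, xs n ∈ D) ∧ Tendsto xs atTop (nhds x) ∧
        Tendsto (fun n => H (xs n)) atTop (nhds y) ∧
        Tendsto (fun n => IX (xs n)) atTop (nhds (IX x))) :
    ∀ y : F,
      (⨅ x ∈ {x : E | G (x, y) = 0}, IX x) =
        ⨅ x ∈ {x : E | ∃ xs : ℕ → E, (∀ n, xs n ∈ D) ∧
          Tendsto xs atTop (nhds x) ∧ Tendsto (fun n => H (xs n)) atTop (nhds y)}, IX x := by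
  intro y
  apply le_antisymm
  · refine le_iInf₂ fun x hx => ?_
    obtain ⟨xs, hD, hx1, hx2⟩ := hx
    have hGx : G (x, y) = 0 := by
      have h : Tendsto (fun n => G (xs n, H (xs n))) atTop (nhds (G (x, y))) :=
        (hG.tendsto _).comp (hx1.prodMk_nhds hx2)
      have heq : (fun n => G (xs n, H (xs n))) = fun _ => (0 : ℝ) := by
        funext n; exact (hH _ (hD n)).1
      rw [heq] at h
      exact tendsto_nhds_unique h tendsto_const_nhds
    exact iInf₂_le x hGx
  · refine le_iInf₂ fun x hx => ?_
    by_cases hT : IX x = ⊤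
    · rw [hT]; exact le_top
    · obtain ⟨xs, hD, h1, h2, _⟩ := happrox x y hx hT
      exact iInf₂_le x ⟨xs, hD, h1, h2⟩
end

section
/- Let ζ be a nonnegative random variable with positive finite mean. Define α(θ) = log E[exp(θζ)], α*(x) = sup_θ (θx - α(θ)), and g(x) = x·α*(1/x) = sup_{θ < θ*}(θ - x·α(θ)) where θ* = sup{θ > 0 : α(θ) < ∞}. If the essential infimum of ζ equals 0, then g(x) < ∞ for all x ≥ 1/E[ζ]. -/
open MeasureTheory ProbabilityTheory

/-- `θ < θ*` where `θ* = sup {θ > 0 : E[exp(θζ)] < ∞}` (and `θ* = 0` if that set is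
empty, since `α(θ) < ∞` always holds for `θ ≤ 0` when `ζ ≥ 0`). -/
def LtThetaStar {Ω : Type*} [MeasurableSpace Ω] (μ : Measure Ω) (ζ : Ω → ℝ) (θ : ℝ) : Prop :=
  θ < 0 ∨ ∃ θ' : ℝ, θ < θ' ∧ 0 < θ' ∧ Integrable (fun ω => Real.exp (θ' * ζ ω)) μ

/-!
For `θ ≤ 0` the Chernoff bound on the lower tail gives `α(θ) ≥ θ ε + log P(ζ ≤ ε)`, so with
`ε = 1/x` the term `θ - x α(θ)` is at most `-x log P(ζ ≤ 1/x)`, which is finite because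
`essinf ζ = 0`. For `θ > 0` Jensen gives `α(θ) ≥ θ E[ζ]`, so `θ - x α(θ) ≤ θ (1 - x E[ζ]) ≤ 0`
as soon as `x ≥ 1/E[ζ]`.
-/

namespace ProbabilityTheory

open Real

variable {Ω : Type*} [MeasurableSpace Ω] {μ : Measure Ω} {X : Ω → ℝ} {t : ℝ}

lemma integrable_exp_mul_of_nonpos_of_nonneg [IsFiniteMeasure μ] (hX : AEMeasurable X μ)
    (hX₀ : ∀ᵐ ω ∂μ, 0 ≤ X ω) (ht : t ≤ 0) :
    Integrable (fun ω ↦ exp (t * X ω)) μ := by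
  refine .of_mem_Icc 0 1 (measurable_exp.comp_aemeasurable (hX.const_mul t)) ?_
  filter_upwards [hX₀] with ω hω
  exact ⟨(exp_pos _).le, exp_le_one_iff.mpr (mul_nonpos_of_nonpos_of_nonneg ht hω)⟩

lemma mul_integral_le_cgf [IsProbabilityMeasure μ] (hX : Integrable X μ)
    (h_int : Integrable (fun ω ↦ exp (t * X ω)) μ) :
    t * ∫ ω, X ω ∂μ ≤ cgf X μ t := by
  have jensen : exp (t * ∫ ω, X ω ∂μ) ≤ mgf X μ t := by
    simpa [mgf, integral_const_mul] using
      convexOn_exp.map_integral_le continuous_exp.continuousOn isClosed_univ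
        (.of_forall fun _ ↦ Set.mem_univ _) (hX.const_mul t) h_int
  simpa [cgf] using log_le_log (exp_pos _) jensen

lemma mul_add_log_measureReal_le_cgf [IsFiniteMeasure μ] (ε : ℝ) (ht : t ≤ 0)
    (h_int : Integrable (fun ω ↦ exp (t * X ω)) μ) (hpos : 0 < μ.real {ω | X ω ≤ ε}) :
    t * ε + log (μ.real {ω | X ω ≤ ε}) ≤ cgf X μ t := by
  have chernoff := log_le_log hpos (measure_le_le_exp_cgf ε ht h_int)
  rw [log_exp] at chernoff
  linarith

end ProbabilityTheory

section

open Real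

variable {Ω : Type*} [MeasurableSpace Ω] {μ : Measure Ω} {X : Ω → ℝ} {θ : ℝ}

lemma LtThetaStar.integrable_exp_mul [IsFiniteMeasure μ] (h : LtThetaStar μ X θ)
    (hX : AEMeasurable X μ) (hX₀ : ∀ᵐ ω ∂μ, 0 ≤ X ω) :
    Integrable (fun ω ↦ exp (θ * X ω)) μ := by
  rcases le_or_gt θ 0 with hθ | hθ
  · exact integrable_exp_mul_of_nonpos_of_nonneg hX hX₀ hθ
  obtain hθ' | ⟨θ', hθθ', -, h_int⟩ := h
  · exact absurd hθ' hθ.not_gt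
  · exact integrable_exp_mul_of_nonneg_of_le h_int hθ.le hθθ'.le

lemma sub_mul_cgf_le_of_nonpos [IsFiniteMeasure μ] {x : ℝ} (hx : 0 < x) (hθ : θ ≤ 0)
    (h_int : Integrable (fun ω ↦ exp (θ * X ω)) μ) (hpos : 0 < μ.real {ω | X ω ≤ x⁻¹}) :
    θ - x * cgf X μ θ ≤ -x * log (μ.real {ω | X ω ≤ x⁻¹}) := by
  have h := mul_le_mul_of_nonneg_left (mul_add_log_measureReal_le_cgf x⁻¹ hθ h_int hpos) hx.le
  rw [mul_add, mul_left_comm, mul_inv_cancel₀ hx.ne', mul_one] at h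
  linarith

lemma sub_mul_cgf_nonpos_of_nonneg [IsProbabilityMeasure μ] {x : ℝ} (hX : Integrable X μ)
    (hx₀ : 0 ≤ x) (hx : 1 ≤ x * ∫ ω, X ω ∂μ) (hθ : 0 ≤ θ)
    (h_int : Integrable (fun ω ↦ exp (θ * X ω)) μ) :
    θ - x * cgf X μ θ ≤ 0 := by
  nlinarith [mul_le_mul_of_nonneg_left (mul_integral_le_cgf hX h_int) hx₀]

end

theorem g_finite_of_essinf_zero_general {Ω : Type*} [MeasurableSpace Ω]
    (μ : Measure Ω) [IsProbabilityMeasure μ]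
    (ζ : Ω → ℝ)
    (hnonneg : ∀ᵐ ω ∂μ, 0 ≤ ζ ω)
    (hint : Integrable ζ μ) (hmean : 0 < ∫ ω, ζ ω ∂μ)
    (hessinf : ∀ ε > (0 : ℝ), 0 < μ {ω | ζ ω < ε}) :
    ∀ x : ℝ, (∫ ω, ζ ω ∂μ)⁻¹ ≤ x →
      BddAbove ((fun θ => θ - x * cgf ζ μ θ) '' {θ : ℝ | LtThetaStar μ ζ θ}) := by
  intro x hx
  have hx₀ : 0 < x := (inv_pos.mpr hmean).trans_le hx
  have hxm : 1 ≤ x * ∫ ω, ζ ω ∂μ := by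
    simpa [inv_mul_cancel₀ hmean.ne'] using mul_le_mul_of_nonneg_right hx hmean.le
  have hpos : 0 < μ.real {ω | ζ ω ≤ x⁻¹} :=
    ENNReal.toReal_pos ((hessinf _ (inv_pos.mpr hx₀)).trans_le
      (measure_mono (Set.ofPred_subset_ofPred.mpr fun _ ↦ le_of_lt))).ne' (measure_ne_top _ _)
  refine ⟨max 0 (-x * Real.log (μ.real {ω | ζ ω ≤ x⁻¹})), ?_⟩
  rintro _ ⟨θ, hθ, rfl⟩
  have h_int := LtThetaStar.integrable_exp_mul hθ hint.aemeasurable hnonneg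
  rcases le_total θ 0 with hθ₀ | hθ₀
  · exact (sub_mul_cgf_le_of_nonpos hx₀ hθ₀ h_int hpos).trans (le_max_right _ _)
  · exact (sub_mul_cgf_nonpos_of_nonneg hint hx₀.le hxm hθ₀ h_int).trans (le_max_left _ _)

/-- If `ζ ≥ 0` has positive finite mean and `essinf ζ = 0`, then
`g(x) = sup_{θ < θ*} (θ - x α(θ))` is finite for every `x ≥ 1/E[ζ]`. -/
theorem g_finite_of_essinf_zero {Ω : Type*} [MeasurableSpace Ω]
    (μ : Measure Ω) [IsProbabilityMeasure μ]
    (ζ : Ω → ℝ) (hmeas : Measurable ζ)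
    (hnonneg : ∀ᵐ ω ∂μ, 0 ≤ ζ ω)
    (hint : Integrable ζ μ) (hmean : 0 < ∫ ω, ζ ω ∂μ)
    (hessinf : ∀ ε > (0 : ℝ), 0 < μ {ω | ζ ω < ε}) :
    ∀ x : ℝ, (∫ ω, ζ ω ∂μ)⁻¹ ≤ x →
      BddAbove ((fun θ => θ - x * cgf ζ μ θ) '' {θ : ℝ | LtThetaStar μ ζ θ}) :=
  g_finite_of_essinf_zero_general μ ζ hnonneg hint hmean hessinf
end

section
/- With w_δ(X,T) := sup_{t∈[0,T]} ||X(t+δ) - X(t)|| (where ||·|| is the max over components), one has w_δ(Γ(X,P,N), T) ≤ w_δ(N, T) + w_δ(P, ||X(T)||), for Γ(X,P,N)^(i)(t) = N^(i)(t) + Σ_j P^(j,i)(X^(j)(t)) with X, N non-decreasing cadlag and each P^(j,i) non-decreasing cadlag. -/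
/-- The routing map `Γ(X,P,N)^(i)(t) = N^(i)(t) + Σ_j P^(j,i)(X^(j)(t))`. -/
def Gamma (K : ℕ) (X : ℝ → Fin K → ℝ) (P : ℝ → Fin K → Fin K → ℝ)
    (N : ℝ → Fin K → ℝ) : ℝ → Fin K → ℝ :=
  fun t i => N t i + ∑ j, P (X t j) j i

/-- Modulus of continuity `w_δ(f,T) = sup_{t ∈ [0,T]} max_i (f^(i)(t+δ) - f^(i)(t))`. -/
noncomputable def wmodV (K : ℕ) (f : ℝ → Fin K → ℝ) (δ T : ℝ) : ℝ :=
  sSup {v : ℝ | ∃ t ∈ Set.Icc (0 : ℝ) T, ∃ i : Fin K, v = f (t + δ) i - f t i}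

lemma wmod_bdd (K : ℕ) (f : ℝ → Fin K → ℝ) (δ T : ℝ) (hδ : 0 ≤ δ)
    (hmono : ∀ i, Monotone (fun t => f t i)) :
    BddAbove {v : ℝ | ∃ t ∈ Set.Icc (0 : ℝ) T, ∃ i : Fin K, v = f (t + δ) i - f t i} := by
  refine ⟨∑ i, (f (T + δ) i - f 0 i), ?_⟩
  rintro v ⟨t, ht, i, rfl⟩
  have h1 : f (t + δ) i - f t i ≤ f (T + δ) i - f 0 i := by
    have := hmono i (by linarith [ht.2] : t + δ ≤ T + δ)
    have := hmono i ht.1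
    simp only at *
    linarith
  refine h1.trans (Finset.single_le_sum (f := fun i => f (T + δ) i - f 0 i) ?_ (Finset.mem_univ i))
  intro j _
  have h2 := hmono j (by linarith [ht.1, ht.2] : (0:ℝ) ≤ T + δ)
  simp only at h2 ⊢
  linarith

lemma wmod_nonneg (K : ℕ) (hK : 0 < K) (f : ℝ → Fin K → ℝ) (δ T : ℝ)
    (hmono : ∀ i, Monotone (fun t => f t i)) (hδ : 0 ≤ δ) (hT : 0 ≤ T) :
    0 ≤ wmodV K f δ T := by
  have hel : f (0 + δ) ⟨0, hK⟩ - f 0 ⟨0, hK⟩ ∈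
      {v : ℝ | ∃ t ∈ Set.Icc (0 : ℝ) T, ∃ i : Fin K, v = f (t + δ) i - f t i} :=
    ⟨0, ⟨le_refl 0, hT⟩, ⟨0, hK⟩, rfl⟩
  have h0 : (0:ℝ) ≤ f (0 + δ) ⟨0, hK⟩ - f 0 ⟨0, hK⟩ := by
    have := hmono ⟨0, hK⟩ (by linarith : (0:ℝ) ≤ 0 + δ)
    simp only at this; linarith
  exact h0.trans (le_csSup (wmod_bdd K f δ T hδ hmono) hel)

/-- `w_δ(Γ(X,P,N),T) ≤ w_δ(N,T) + w_δ(P, ‖X(T)‖)`, where the modulus of the matrix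
process `P` is taken with window `w_δ(X,T)` over arguments in `[0, ‖X(T)‖]` (the range
of `X` on `[0,T]`). -/
theorem wmod_Gamma_le (K : ℕ) (hK : 0 < K)
    (X N : ℝ → Fin K → ℝ) (P : ℝ → Fin K → Fin K → ℝ)
    (hXmono : ∀ j, Monotone (fun t => X t j)) (hX0 : ∀ t j, 0 ≤ X t j)
    (hXz : ∀ j, X 0 j = 0)
    (hNmono : ∀ i, Monotone (fun t => N t i))
    (hPmono : ∀ j i, Monotone (fun u => P u j i)) (hP0 : ∀ u j i, 0 ≤ P u j i)
    (hPsub : ∀ u v : ℝ, 0 ≤ v → v ≤ u → ∀ j, ∑ i, (P u j i - P v j i) ≤ u - v)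
    (δ T : ℝ) (hδ : 0 < δ) (hT : 0 ≤ T) :
    wmodV K (Gamma K X P N) δ T ≤
      wmodV K N δ T +
        sSup {v : ℝ | ∃ i : Fin K, ∃ u : Fin K → ℝ,
          (∀ j, u j ∈ Set.Icc (0 : ℝ) (⨆ j', X T j')) ∧
          v = ∑ j, (P (u j + wmodV K X δ T) j i - P (u j) j i)} := by
  set w := wmodV K X δ T with hw
  have hwnn : 0 ≤ w := wmod_nonneg K hK X δ T hXmono hδ.le hT
  set SP := {v : ℝ | ∃ i : Fin K, ∃ u : Fin K → ℝ,
      (∀ j, u j ∈ Set.Icc (0 : ℝ) (⨆ j', X T j')) ∧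
      v = ∑ j, (P (u j + w) j i - P (u j) j i)} with hSP
  -- each term of such a sum is ≤ w
  have hterm : ∀ (u : ℝ), 0 ≤ u → ∀ j i, P (u + w) j i - P u j i ≤ w := by
    intro u hu j i
    have hsum := hPsub (u + w) u hu (by linarith) j
    have hle : P (u + w) j i - P u j i ≤ ∑ i', (P (u + w) j i' - P u j i') := by
      refine Finset.single_le_sum (f := fun i' => P (u + w) j i' - P u j i') ?_ (Finset.mem_univ i)
      intro k _
      have := hPmono j k (by linarith : u ≤ u + w)
      simp only at this ⊢; linarith
    linarith
  have hSPbdd : BddAbove SP := by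
    refine ⟨K * w, ?_⟩
    rintro v ⟨i, u, hu, rfl⟩
    calc ∑ j, (P (u j + w) j i - P (u j) j i) ≤ ∑ _j : Fin K, w :=
          Finset.sum_le_sum (fun j _ => hterm (u j) (hu j).1 j i)
      _ = K * w := by simp [mul_comm]
  -- sup of X nonneg
  have hsupnn : (0:ℝ) ≤ ⨆ j', X T j' := by
    have : X T ⟨0, hK⟩ ≤ ⨆ j', X T j' :=
      le_ciSup (f := fun j' => X T j') (Set.Finite.bddAbove (Set.finite_range _)) (⟨0, hK⟩ : Fin K)
    exact (hX0 T ⟨0, hK⟩).trans this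
  have hSPnn : (0:ℝ) ≤ sSup SP := by
    have hel : (∑ j, (P ((0:ℝ) + w) j ⟨0, hK⟩ - P 0 j ⟨0, hK⟩)) ∈ SP := by
      refine ⟨⟨0, hK⟩, fun _ => (0:ℝ), fun j => ?_, rfl⟩
      exact Set.mem_Icc.mpr ⟨le_refl 0, hsupnn⟩
    have h0 : (0:ℝ) ≤ ∑ j, (P ((0:ℝ) + w) j ⟨0, hK⟩ - P 0 j ⟨0, hK⟩) := by
      refine Finset.sum_nonneg (fun j _ => ?_)
      have := hPmono j ⟨0, hK⟩ (by linarith : (0:ℝ) ≤ 0 + w)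
      simp only at this; linarith
    exact h0.trans (le_csSup hSPbdd hel)
  have hNnn : 0 ≤ wmodV K N δ T := wmod_nonneg K hK N δ T hNmono hδ.le hT
  refine Real.sSup_le ?_ (by linarith)
  rintro v ⟨t, ht, i, rfl⟩
  have hN : N (t + δ) i - N t i ≤ wmodV K N δ T :=
    le_csSup (wmod_bdd K N δ T hδ.le hNmono) ⟨t, ht, i, rfl⟩
  -- X jump bound
  have hXjump : ∀ j, X (t + δ) j ≤ X t j + w := by
    intro j
    have : X (t + δ) j - X t j ≤ w :=
      le_csSup (wmod_bdd K X δ T hδ.le hXmono) ⟨t, ht, j, rfl⟩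
    linarith
  have hPsumle : ∑ j, (P (X (t + δ) j) j i - P (X t j) j i) ≤ sSup SP := by
    have h1 : ∑ j, (P (X (t + δ) j) j i - P (X t j) j i) ≤
        ∑ j, (P (X t j + w) j i - P (X t j) j i) := by
      refine Finset.sum_le_sum (fun j _ => ?_)
      have := hPmono j i (hXjump j)
      simp only at this; linarith
    refine h1.trans (le_csSup hSPbdd ?_)
    refine ⟨i, fun j => X t j, fun j => ⟨hX0 t j, ?_⟩, rfl⟩
    have h2 : X t j ≤ X T j := hXmono j ht.2
    exact h2.trans (le_ciSup (Set.Finite.bddAbove (Set.finite_range _)) j)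
  have : Gamma K X P N (t + δ) i - Gamma K X P N t i =
      (N (t + δ) i - N t i) + ∑ j, (P (X (t + δ) j) j i - P (X t j) j i) := by
    simp [Gamma, Finset.sum_sub_distrib]; ring
  linarith [this ▸ add_le_add hN hPsumle]
end

section
/- Consider the linear network: N^(i)(t) = N^(i) + λ^(i) t with λ^(i) ≥ 0, N^(i) ∈ ℝ₊; S^(i)(t) = μ^(i) t with μ^(i) ≥ 0; P^(i,j)(t) = P^(i,j)·t where P is a substochastic matrix with ρ(P) < 1. Then the fixed point equation A^(i)(t) = N^(i) + λ^(i) t + Σ_j P^(j,i) D^(j)(t), D^(i)(t) = μ^(i) t ∧ inf_{0≤s≤t}(A^(i)(s) + μ^(i)(t-s)), has a unique solution, given by A(t) = x(μt, P, N + λt), where x(y,P,α) is the unique solution of x^(i) = α^(i) + Σ_j P^(j,i)(x^(j) ∧ y^(j)). -/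
open Matrix Polynomial Filter Topology

namespace LNFPaux

variable {K : ℕ}

lemma charpoly_eval_one {K : ℕ} (M : Matrix (Fin K) (Fin K) ℂ) :
    M.charpoly.eval 1 = (1 - M).det := by
  rw [Matrix.charpoly, ← Polynomial.coe_evalRingHom, RingHom.map_det]
  congr 1
  ext i j
  by_cases h : i = j <;>
    simp [Matrix.charmatrix_apply, Matrix.one_apply, h, Matrix.diagonal_apply]

lemma spec_zero {K : ℕ} (P : Matrix (Fin K) (Fin K) ℝ)
    (hP0 : ∀ i j, 0 ≤ P i j) (hP1 : ∀ i, ∑ j, P i j ≤ 1)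
    (hρ : ∀ z : ℂ, (Matrix.charpoly (P.map (fun x => (x : ℂ)))).IsRoot z → ‖z‖ < 1)
    (v : Fin K → ℝ) (hv : ∀ i, 0 ≤ v i) (hle : ∀ i, v i ≤ ∑ j, P j i * v j) :
    v = 0 := by
  by_contra hne
  have hsum : ∑ i, ((∑ j, P j i * v j) - v i) ≤ 0 := by
    have h1 : ∑ i, ∑ j, P j i * v j ≤ ∑ j, v j := by
      rw [Finset.sum_comm]
      calc ∑ j, ∑ i, P j i * v j = ∑ j, (∑ i, P j i) * v j := by
            simp [Finset.sum_mul]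
        _ ≤ ∑ j, v j := by
            apply Finset.sum_le_sum
            intro j _
            calc (∑ i, P j i) * v j ≤ 1 * v j :=
              mul_le_mul_of_nonneg_right (hP1 j) (hv j)
            _ = v j := one_mul _
    simpa [Finset.sum_sub_distrib] using sub_nonpos.mpr h1
  have heq : ∀ i, (∑ j, P j i * v j) = v i := by
    have hiff := Finset.sum_eq_zero_iff_of_nonneg (f := fun i => (∑ j, P j i * v j) - v i)
      (s := Finset.univ) (fun i _ => sub_nonneg.mpr (hle i))
    have hz : ∑ i, ((∑ j, P j i * v j) - v i) = 0 :=
      le_antisymm hsum (Finset.sum_nonneg fun i _ => sub_nonneg.mpr (hle i))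
    intro i
    have h2 : (∑ j, P j i * v j) - v i = 0 := (hiff.mp hz) i (Finset.mem_univ i)
    linarith
  have hdet : (1 - Pᵀ).det = 0 := by
    rw [← Matrix.exists_mulVec_eq_zero_iff]
    refine ⟨v, hne, ?_⟩
    ext i
    show ∑ x, (1 - Pᵀ) i x * v x = 0
    have hterm : ∀ x : Fin K, (1 - Pᵀ) i x * v x = (if i = x then v x else 0) - P x i * v x := by
      intro x
      by_cases h : i = x <;>
        simp [Matrix.sub_apply, Matrix.one_apply, Matrix.transpose_apply, h, sub_mul]
    rw [Finset.sum_congr rfl fun x _ => hterm x, Finset.sum_sub_distrib, Finset.sum_ite_eq,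
      heq i]
    simp
  have hdet2 : (1 - P).det = 0 := by
    have h3 : (1 - P)ᵀ = 1 - Pᵀ := by
      rw [Matrix.transpose_sub, Matrix.transpose_one]
    rw [← Matrix.det_transpose, h3, hdet]
  have hroot : (Matrix.charpoly (P.map (fun x => (x : ℂ)))).IsRoot 1 := by
    show Polynomial.eval 1 _ = 0
    rw [charpoly_eval_one]
    have h4 : (1 : Matrix (Fin K) (Fin K) ℂ) - P.map (fun x => (x : ℂ))
        = (algebraMap ℝ ℂ).mapMatrix (1 - P) := by
      ext i j
      by_cases h : i = j <;>
        simp [Matrix.one_apply, h, RingHom.mapMatrix_apply, Matrix.map_apply]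
    rw [h4, ← RingHom.map_det, hdet2, map_zero]
  have habs := hρ 1 hroot
  simp at habs

noncomputable def iter (P : Matrix (Fin K) (Fin K) ℝ) (N₀ lam μ : Fin K → ℝ) (t : ℝ) :
    ℕ → Fin K → ℝ
  | 0 => 0
  | n+1 => fun i => N₀ i + lam i * t + ∑ j, P j i * min (iter P N₀ lam μ t n j) (μ j * t)

noncomputable def calA (P : Matrix (Fin K) (Fin K) ℝ) (N₀ lam μ : Fin K → ℝ) (t : ℝ)
    (i : Fin K) : ℝ :=
  ⨆ n, iter P N₀ lam μ t n i

lemma min_combo {θ a b c d : ℝ} (hθ : 0 ≤ θ) (hθ1 : θ ≤ 1) :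
    θ * min a b + (1 - θ) * min c d ≤ min (θ * a + (1 - θ) * c) (θ * b + (1 - θ) * d) := by
  have h1θ : (0:ℝ) ≤ 1 - θ := by linarith
  refine le_min ?_ ?_
  · have := mul_le_mul_of_nonneg_left (min_le_left a b) hθ
    have := mul_le_mul_of_nonneg_left (min_le_left c d) h1θ
    linarith
  · have := mul_le_mul_of_nonneg_left (min_le_right a b) hθ
    have := mul_le_mul_of_nonneg_left (min_le_right c d) h1θ
    linarith

lemma iter_succ (P : Matrix (Fin K) (Fin K) ℝ) (N₀ lam μ : Fin K → ℝ) (t : ℝ) (n : ℕ)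
    (i : Fin K) :
    iter P N₀ lam μ t (n+1) i
      = N₀ i + lam i * t + ∑ j, P j i * min (iter P N₀ lam μ t n j) (μ j * t) := rfl

variable (P : Matrix (Fin K) (Fin K) ℝ) (N₀ lam μ : Fin K → ℝ)
variable (hP0 : ∀ i j, 0 ≤ P i j)
variable (hN₀ : ∀ i, 0 ≤ N₀ i) (hlam : ∀ i, 0 ≤ lam i) (hμ : ∀ i, 0 ≤ μ i)

section

include hP0 hN₀ hlam hμ

lemma iter_nonneg {t : ℝ} (ht : 0 ≤ t) : ∀ n i, 0 ≤ iter P N₀ lam μ t n i := by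
  intro n
  induction n with
  | zero => intro i; simp [iter]
  | succ n ih =>
    intro i
    have h1 : 0 ≤ ∑ j, P j i * min (iter P N₀ lam μ t n j) (μ j * t) :=
      Finset.sum_nonneg fun j _ => mul_nonneg (hP0 j i)
        (le_min (ih j) (mul_nonneg (hμ j) ht))
    have h2 : 0 ≤ lam i * t := mul_nonneg (hlam i) ht
    simp only [iter]
    linarith [hN₀ i]

lemma iter_mono_n {t : ℝ} (ht : 0 ≤ t) :
    ∀ n i, iter P N₀ lam μ t n i ≤ iter P N₀ lam μ t (n+1) i := by
  intro n
  induction n with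
  | zero =>
    intro i
    have : 0 ≤ iter P N₀ lam μ t 1 i := iter_nonneg P N₀ lam μ hP0 hN₀ hlam hμ ht 1 i
    simpa [iter] using this
  | succ n ih =>
    intro i
    rw [iter_succ, iter_succ]
    refine add_le_add le_rfl (Finset.sum_le_sum fun j _ => ?_)
    exact mul_le_mul_of_nonneg_left (min_le_min (ih j) le_rfl) (hP0 j i)

lemma iter_le_bound {t : ℝ} (ht : 0 ≤ t) :
    ∀ n i, iter P N₀ lam μ t n i ≤ N₀ i + lam i * t + ∑ j, P j i * (μ j * t) := by
  intro n
  induction n with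
  | zero =>
    intro i
    simp only [iter]
    have h1 : 0 ≤ ∑ j, P j i * (μ j * t) :=
      Finset.sum_nonneg fun j _ => mul_nonneg (hP0 j i) (mul_nonneg (hμ j) ht)
    have h2 : 0 ≤ lam i * t := mul_nonneg (hlam i) ht
    have := hN₀ i
    positivity
  | succ n ih =>
    intro i
    rw [iter_succ]
    refine add_le_add le_rfl (Finset.sum_le_sum fun j _ => ?_)
    exact mul_le_mul_of_nonneg_left (min_le_right _ _) (hP0 j i)

lemma iter_bddAbove {t : ℝ} (ht : 0 ≤ t) (i : Fin K) :
    BddAbove (Set.range fun n => iter P N₀ lam μ t n i) := by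
  refine ⟨N₀ i + lam i * t + ∑ j, P j i * (μ j * t), ?_⟩
  rintro x ⟨n, rfl⟩
  exact iter_le_bound P N₀ lam μ hP0 hN₀ hlam hμ ht n i

lemma iter_tendsto {t : ℝ} (ht : 0 ≤ t) (i : Fin K) :
    Tendsto (fun n => iter P N₀ lam μ t n i) atTop (𝓝 (calA P N₀ lam μ t i)) :=
  tendsto_atTop_ciSup
    (monotone_nat_of_le_succ fun n => iter_mono_n P N₀ lam μ hP0 hN₀ hlam hμ ht n i)
    (iter_bddAbove P N₀ lam μ hP0 hN₀ hlam hμ ht i)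

lemma calA_fixed {t : ℝ} (ht : 0 ≤ t) (i : Fin K) :
    calA P N₀ lam μ t i
      = N₀ i + lam i * t + ∑ j, P j i * min (calA P N₀ lam μ t j) (μ j * t) := by
  have h1 : Tendsto (fun n => iter P N₀ lam μ t (n+1) i) atTop (𝓝 (calA P N₀ lam μ t i)) :=
    (iter_tendsto P N₀ lam μ hP0 hN₀ hlam hμ ht i).comp (tendsto_add_atTop_nat 1)
  have h2 : Tendsto (fun n => iter P N₀ lam μ t (n+1) i) atTop
      (𝓝 (N₀ i + lam i * t + ∑ j, P j i * min (calA P N₀ lam μ t j) (μ j * t))) := by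
    simp only [iter_succ]
    apply Tendsto.add
    · exact tendsto_const_nhds
    · apply tendsto_finset_sum
      intro j _
      exact Tendsto.const_mul _
        ((iter_tendsto P N₀ lam μ hP0 hN₀ hlam hμ ht j).min tendsto_const_nhds)
  exact tendsto_nhds_unique h1 h2

lemma calA_nonneg {t : ℝ} (ht : 0 ≤ t) (i : Fin K) : 0 ≤ calA P N₀ lam μ t i := by
  have := le_ciSup (iter_bddAbove P N₀ lam μ hP0 hN₀ hlam hμ ht i) 0
  calc (0:ℝ) = iter P N₀ lam μ t 0 i := by simp [iter]
    _ ≤ calA P N₀ lam μ t i := this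

lemma iter_mono_t {s t : ℝ} (hs : 0 ≤ s) (hst : s ≤ t) :
    ∀ n i, iter P N₀ lam μ s n i ≤ iter P N₀ lam μ t n i := by
  intro n
  induction n with
  | zero => intro i; simp [iter]
  | succ n ih =>
    intro i
    rw [iter_succ, iter_succ]
    refine add_le_add (add_le_add le_rfl (mul_le_mul_of_nonneg_left hst (hlam i)))
      (Finset.sum_le_sum fun j _ => ?_)
    exact mul_le_mul_of_nonneg_left
      (min_le_min (ih j) (mul_le_mul_of_nonneg_left hst (hμ j))) (hP0 j i)

lemma calA_mono_t {s t : ℝ} (hs : 0 ≤ s) (hst : s ≤ t) (i : Fin K) :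
    calA P N₀ lam μ s i ≤ calA P N₀ lam μ t i := by
  apply ciSup_le
  intro n
  calc iter P N₀ lam μ s n i ≤ iter P N₀ lam μ t n i :=
      iter_mono_t P N₀ lam μ hP0 hN₀ hlam hμ hs hst n i
    _ ≤ calA P N₀ lam μ t i :=
      le_ciSup (iter_bddAbove P N₀ lam μ hP0 hN₀ hlam hμ (hs.trans hst) i) n

lemma iter_concave {s t θ : ℝ} (hs : 0 ≤ s) (ht : 0 ≤ t) (hθ : 0 ≤ θ) (hθ1 : θ ≤ 1) :
    ∀ n i, θ * iter P N₀ lam μ s n i + (1 - θ) * iter P N₀ lam μ t n i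
      ≤ iter P N₀ lam μ (θ * s + (1 - θ) * t) n i := by
  intro n
  induction n with
  | zero => intro i; simp [iter]
  | succ n ih =>
    intro i
    rw [iter_succ, iter_succ, iter_succ]
    have hterm : ∀ j : Fin K,
        θ * (P j i * min (iter P N₀ lam μ s n j) (μ j * s))
          + (1 - θ) * (P j i * min (iter P N₀ lam μ t n j) (μ j * t))
        ≤ P j i * min (iter P N₀ lam μ (θ * s + (1 - θ) * t) n j)
            (μ j * (θ * s + (1 - θ) * t)) := by
      intro j
      calc θ * (P j i * min (iter P N₀ lam μ s n j) (μ j * s))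
            + (1 - θ) * (P j i * min (iter P N₀ lam μ t n j) (μ j * t))
          = P j i * (θ * min (iter P N₀ lam μ s n j) (μ j * s)
              + (1 - θ) * min (iter P N₀ lam μ t n j) (μ j * t)) := by ring
        _ ≤ P j i * min (iter P N₀ lam μ (θ * s + (1 - θ) * t) n j)
              (μ j * (θ * s + (1 - θ) * t)) := by
            apply mul_le_mul_of_nonneg_left _ (hP0 j i)
            calc θ * min (iter P N₀ lam μ s n j) (μ j * s)
                  + (1 - θ) * min (iter P N₀ lam μ t n j) (μ j * t)
                ≤ min (θ * iter P N₀ lam μ s n j + (1 - θ) * iter P N₀ lam μ t n j)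
                    (θ * (μ j * s) + (1 - θ) * (μ j * t)) := min_combo hθ hθ1
              _ ≤ min (iter P N₀ lam μ (θ * s + (1 - θ) * t) n j)
                    (μ j * (θ * s + (1 - θ) * t)) := by
                  refine min_le_min (ih j) (le_of_eq ?_)
                  ring
    have hsum : ∑ j, (θ * (P j i * min (iter P N₀ lam μ s n j) (μ j * s))
          + (1 - θ) * (P j i * min (iter P N₀ lam μ t n j) (μ j * t)))
        ≤ ∑ j, P j i * min (iter P N₀ lam μ (θ * s + (1 - θ) * t) n j)
            (μ j * (θ * s + (1 - θ) * t)) :=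
      Finset.sum_le_sum fun j _ => hterm j
    have hexpand : θ * (N₀ i + lam i * s + ∑ j, P j i * min (iter P N₀ lam μ s n j) (μ j * s))
        + (1 - θ) * (N₀ i + lam i * t + ∑ j, P j i * min (iter P N₀ lam μ t n j) (μ j * t))
        = N₀ i + lam i * (θ * s + (1 - θ) * t)
          + ∑ j, (θ * (P j i * min (iter P N₀ lam μ s n j) (μ j * s))
              + (1 - θ) * (P j i * min (iter P N₀ lam μ t n j) (μ j * t))) := by
      rw [Finset.sum_add_distrib, ← Finset.mul_sum, ← Finset.mul_sum]
      ring
    rw [hexpand]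
    exact add_le_add le_rfl hsum

lemma calA_concave {s t θ : ℝ} (hs : 0 ≤ s) (ht : 0 ≤ t) (hθ : 0 ≤ θ) (hθ1 : θ ≤ 1)
    (i : Fin K) :
    θ * calA P N₀ lam μ s i + (1 - θ) * calA P N₀ lam μ t i
      ≤ calA P N₀ lam μ (θ * s + (1 - θ) * t) i := by
  have hmid : 0 ≤ θ * s + (1 - θ) * t := by nlinarith
  have hlim : Tendsto (fun n => θ * iter P N₀ lam μ s n i + (1 - θ) * iter P N₀ lam μ t n i)
      atTop (𝓝 (θ * calA P N₀ lam μ s i + (1 - θ) * calA P N₀ lam μ t i)) :=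
    ((iter_tendsto P N₀ lam μ hP0 hN₀ hlam hμ hs i).const_mul θ).add
      ((iter_tendsto P N₀ lam μ hP0 hN₀ hlam hμ ht i).const_mul (1 - θ))
  refine le_of_tendsto hlim (Filter.Eventually.of_forall fun n => ?_)
  calc θ * iter P N₀ lam μ s n i + (1 - θ) * iter P N₀ lam μ t n i
      ≤ iter P N₀ lam μ (θ * s + (1 - θ) * t) n i :=
        iter_concave P N₀ lam μ hP0 hN₀ hlam hμ hs ht hθ hθ1 n i
    _ ≤ calA P N₀ lam μ (θ * s + (1 - θ) * t) i :=
        le_ciSup (iter_bddAbove P N₀ lam μ hP0 hN₀ hlam hμ hmid i) n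

/-- The key concavity estimate: for `0 ≤ u ≤ s`,
`calA u + μ (s - u) ≥ min (calA s) (μ s)`. -/
lemma calA_key {u s : ℝ} (hu : 0 ≤ u) (hus : u ≤ s) (j : Fin K) :
    min (calA P N₀ lam μ s j) (μ j * s) ≤ calA P N₀ lam μ u j + μ j * (s - u) := by
  have hs : 0 ≤ s := hu.trans hus
  rcases eq_or_lt_of_le hs with hs0 | hs0
  · -- s = 0, hence u = 0
    have hu0 : u = 0 := le_antisymm (hus.trans hs0.symm.le) hu
    have hs0' : s = 0 := hs0.symm
    subst hu0; subst hs0'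
    simp only [mul_zero, sub_zero, add_zero]
    exact min_le_of_left_le le_rfl
  · set θ : ℝ := (s - u) / s with hθdef
    have hθ : 0 ≤ θ := div_nonneg (by linarith) hs
    have hθ1 : θ ≤ 1 := by
      rw [div_le_one hs0]; linarith
    have hmid : θ * 0 + (1 - θ) * s = u := by
      have h' : θ * s = s - u := by rw [hθdef]; exact div_mul_cancel₀ _ hs0.ne'
      linear_combination -h'
    have hconc := calA_concave P N₀ lam μ hP0 hN₀ hlam hμ le_rfl hs hθ hθ1 j
    rw [hmid] at hconc
    have h0 : 0 ≤ calA P N₀ lam μ 0 j := calA_nonneg P N₀ lam μ hP0 hN₀ hlam hμ le_rfl j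
    have hμsu : μ j * (s - u) = θ * (μ j * s) := by
      rw [hθdef]; field_simp
    have hm : min (calA P N₀ lam μ s j) (μ j * s) ≤ calA P N₀ lam μ s j :=
      min_le_left _ _
    have hm2 : min (calA P N₀ lam μ s j) (μ j * s) ≤ μ j * s := min_le_right _ _
    have hθ0 : 0 ≤ θ * calA P N₀ lam μ 0 j := mul_nonneg hθ h0
    -- calA u ≥ (1 - θ) * calA s, so calA u + μ(s-u) ≥ (1-θ) calA s + θ μ s ≥ min
    nlinarith [hconc]

/-- The infimum formula for the constructed solution. -/
lemma sInf_calA {t : ℝ} (ht : 0 ≤ t) (i : Fin K) :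
    min (μ i * t) (sInf ((fun s => calA P N₀ lam μ s i + μ i * (t - s)) '' Set.Icc 0 t))
      = min (calA P N₀ lam μ t i) (μ i * t) := by
  set S := (fun s => calA P N₀ lam μ s i + μ i * (t - s)) '' Set.Icc 0 t with hS
  have hmem : calA P N₀ lam μ t i + μ i * (t - t) ∈ S :=
    Set.mem_image_of_mem _ (Set.mem_Icc.mpr ⟨ht, le_rfl⟩)
  have hne : S.Nonempty := ⟨_, hmem⟩
  have hlb : ∀ x ∈ S, min (calA P N₀ lam μ t i) (μ i * t) ≤ x := by
    rintro x ⟨u, ⟨hu0, hut⟩, rfl⟩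
    exact calA_key P N₀ lam μ hP0 hN₀ hlam hμ hu0 hut i
  have h1 : min (calA P N₀ lam μ t i) (μ i * t) ≤ sInf S := le_csInf hne hlb
  have h2 : sInf S ≤ calA P N₀ lam μ t i := by
    have := csInf_le ⟨_, hlb⟩ hmem
    simpa using this
  apply le_antisymm
  · exact le_min (min_le_of_right_le h2) (min_le_left _ _)
  · exact le_min (min_le_right _ _) h1

/-- Any solution of the system agrees with `calA` on `[0, ∞)`. -/
lemma sol_eq (hP1 : ∀ i, ∑ j, P i j ≤ 1)
    (hρ : ∀ z : ℂ, (Matrix.charpoly (P.map (fun x => (x : ℂ)))).IsRoot z → ‖z‖ < 1)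
    (A D : ℝ → Fin K → ℝ)
    (hpos : ∀ t ≥ (0:ℝ), ∀ i, 0 ≤ A t i ∧ 0 ≤ D t i)
    (hAmono : ∀ i, MonotoneOn (fun t => A t i) (Set.Ici 0))
    (hAeq : ∀ t ≥ (0:ℝ), ∀ i, A t i = N₀ i + lam i * t + ∑ j, P j i * D t j)
    (hDeq : ∀ t ≥ (0:ℝ), ∀ i,
      D t i = min (μ i * t) (sInf ((fun s => A s i + μ i * (t - s)) '' Set.Icc 0 t))) :
    ∀ t ≥ (0:ℝ), ∀ i, A t i = calA P N₀ lam μ t i := by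
  intro t ht
  -- the two "error" vectors on [0, t]
  set c : Fin K → ℝ := fun i =>
    max 0 (sSup ((fun s => calA P N₀ lam μ s i - A s i) '' Set.Icc 0 t)) with hc
  set d : Fin K → ℝ := fun i =>
    max 0 (sSup ((fun s => A s i - calA P N₀ lam μ s i) '' Set.Icc 0 t)) with hd
  have hcnn : ∀ i, 0 ≤ c i := fun i => le_max_left _ _
  have hdnn : ∀ i, 0 ≤ d i := fun i => le_max_left _ _
  have hcbdd : ∀ i, BddAbove ((fun s => calA P N₀ lam μ s i - A s i) '' Set.Icc 0 t) := by
    intro i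
    refine ⟨calA P N₀ lam μ t i, ?_⟩
    rintro x ⟨u, ⟨hu0, hut⟩, rfl⟩
    have h1 := (hpos u hu0 i).1
    have h2 := calA_mono_t P N₀ lam μ hP0 hN₀ hlam hμ hu0 hut i
    simp only
    linarith
  have hdbdd : ∀ i, BddAbove ((fun s => A s i - calA P N₀ lam μ s i) '' Set.Icc 0 t) := by
    intro i
    refine ⟨A t i, ?_⟩
    rintro x ⟨u, ⟨hu0, hut⟩, rfl⟩
    have h1 := calA_nonneg P N₀ lam μ hP0 hN₀ hlam hμ hu0 i
    have h2 := hAmono i hu0 (ht : t ∈ Set.Ici (0:ℝ)) hut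
    simp only at h2 ⊢
    linarith
  have hcub : ∀ s ∈ Set.Icc (0:ℝ) t, ∀ i, calA P N₀ lam μ s i - A s i ≤ c i := by
    intro s hs i
    calc calA P N₀ lam μ s i - A s i
        ≤ sSup ((fun s => calA P N₀ lam μ s i - A s i) '' Set.Icc 0 t) :=
          le_csSup (hcbdd i) (Set.mem_image_of_mem _ hs)
      _ ≤ c i := le_max_right _ _
  have hdub : ∀ s ∈ Set.Icc (0:ℝ) t, ∀ i, A s i - calA P N₀ lam μ s i ≤ d i := by
    intro s hs i
    calc A s i - calA P N₀ lam μ s i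
        ≤ sSup ((fun s => A s i - calA P N₀ lam μ s i) '' Set.Icc 0 t) :=
          le_csSup (hdbdd i) (Set.mem_image_of_mem _ hs)
      _ ≤ d i := le_max_right _ _
  -- lower bound on D
  have hDlb : ∀ s ∈ Set.Icc (0:ℝ) t, ∀ j,
      min (calA P N₀ lam μ s j) (μ j * s) - c j ≤ D s j := by
    rintro s ⟨hs0, hst⟩ j
    rw [hDeq s hs0 j]
    refine le_min ?_ ?_
    · have := min_le_right (calA P N₀ lam μ s j) (μ j * s)
      linarith [hcnn j]
    · refine le_csInf ⟨_, Set.mem_image_of_mem _ (Set.mem_Icc.mpr ⟨hs0, le_rfl⟩)⟩ ?_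
      rintro x ⟨u, ⟨hu0, hus⟩, rfl⟩
      have h1 : calA P N₀ lam μ u j - A u j ≤ c j :=
        hcub u ⟨hu0, hus.trans hst⟩ j
      have h2 := calA_key P N₀ lam μ hP0 hN₀ hlam hμ hu0 hus j
      simp only
      linarith
  -- upper bound on D
  have hDub : ∀ s ∈ Set.Icc (0:ℝ) t, ∀ j,
      D s j ≤ min (calA P N₀ lam μ s j) (μ j * s) + d j := by
    rintro s ⟨hs0, hst⟩ j
    have hDA : D s j ≤ min (μ j * s) (A s j) := by
      rw [hDeq s hs0 j]
      refine min_le_min le_rfl ?_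
      have hbdd : BddBelow ((fun u => A u j + μ j * (s - u)) '' Set.Icc 0 s) := by
        refine ⟨0, ?_⟩
        rintro x ⟨u, ⟨hu0, hus⟩, rfl⟩
        have h1 := (hpos u hu0 j).1
        have h2 : 0 ≤ μ j * (s - u) := mul_nonneg (hμ j) (by linarith)
        simp only
        linarith
      have := csInf_le hbdd
        (Set.mem_image_of_mem (fun u => A u j + μ j * (s - u))
          (Set.mem_Icc.mpr ⟨hs0, le_rfl⟩))
      simpa using this
    have h3 : A s j ≤ calA P N₀ lam μ s j + d j := by
      have := hdub s ⟨hs0, hst⟩ j; linarith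
    have h4 : min (μ j * s) (A s j) ≤ min (calA P N₀ lam μ s j) (μ j * s) + d j := by
      rcases le_total (calA P N₀ lam μ s j) (μ j * s) with h | h
      · rw [min_eq_left h]
        have := min_le_right (μ j * s) (A s j)
        linarith
      · rw [min_eq_right h]
        have := min_le_left (μ j * s) (A s j)
        linarith [hdnn j]
    exact hDA.trans h4
  -- the contraction inequalities
  have hcineq : ∀ i, c i ≤ ∑ j, P j i * c j := by
    intro i
    have hrhs : 0 ≤ ∑ j, P j i * c j :=
      Finset.sum_nonneg fun j _ => mul_nonneg (hP0 j i) (hcnn j)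
    refine max_le hrhs (csSup_le ⟨_, Set.mem_image_of_mem _ (Set.mem_Icc.mpr ⟨le_rfl, ht⟩)⟩ ?_)
    rintro x ⟨s, hs, rfl⟩
    obtain ⟨hs0, hst⟩ := hs
    have hAs := hAeq s hs0 i
    have hcalAs := calA_fixed P N₀ lam μ hP0 hN₀ hlam hμ hs0 i
    have hdiff : calA P N₀ lam μ s i - A s i
        = ∑ j, (P j i * min (calA P N₀ lam μ s j) (μ j * s) - P j i * D s j) := by
      rw [hcalAs, hAs, Finset.sum_sub_distrib]
      ring
    simp only
    rw [hdiff]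
    refine Finset.sum_le_sum fun j _ => ?_
    have h5 := hDlb s ⟨hs0, hst⟩ j
    calc P j i * min (calA P N₀ lam μ s j) (μ j * s) - P j i * D s j
        = P j i * (min (calA P N₀ lam μ s j) (μ j * s) - D s j) := by ring
      _ ≤ P j i * c j := mul_le_mul_of_nonneg_left (by linarith) (hP0 j i)
  have hdineq : ∀ i, d i ≤ ∑ j, P j i * d j := by
    intro i
    have hrhs : 0 ≤ ∑ j, P j i * d j :=
      Finset.sum_nonneg fun j _ => mul_nonneg (hP0 j i) (hdnn j)
    refine max_le hrhs (csSup_le ⟨_, Set.mem_image_of_mem _ (Set.mem_Icc.mpr ⟨le_rfl, ht⟩)⟩ ?_)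
    rintro x ⟨s, hs, rfl⟩
    obtain ⟨hs0, hst⟩ := hs
    have hAs := hAeq s hs0 i
    have hcalAs := calA_fixed P N₀ lam μ hP0 hN₀ hlam hμ hs0 i
    have hdiff : A s i - calA P N₀ lam μ s i
        = ∑ j, (P j i * D s j - P j i * min (calA P N₀ lam μ s j) (μ j * s)) := by
      rw [hcalAs, hAs, Finset.sum_sub_distrib]
      ring
    simp only
    rw [hdiff]
    refine Finset.sum_le_sum fun j _ => ?_
    have h5 := hDub s ⟨hs0, hst⟩ j
    calc P j i * D s j - P j i * min (calA P N₀ lam μ s j) (μ j * s)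
        = P j i * (D s j - min (calA P N₀ lam μ s j) (μ j * s)) := by ring
      _ ≤ P j i * d j := mul_le_mul_of_nonneg_left (by linarith) (hP0 j i)
  have hc0 : c = 0 := spec_zero P hP0 hP1 hρ c hcnn hcineq
  have hd0 : d = 0 := spec_zero P hP0 hP1 hρ d hdnn hdineq
  intro i
  have h6 := hcub t (Set.mem_Icc.mpr ⟨ht, le_rfl⟩) i
  have h7 := hdub t (Set.mem_Icc.mpr ⟨ht, le_rfl⟩) i
  rw [hc0] at h6
  rw [hd0] at h7
  simp only [Pi.zero_apply] at h6 h7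
  linarith

end

end LNFPaux


/-- For the linear network `N^(i)(t) = N^(i) + λ^(i) t`, `S^(i)(t) = μ^(i) t`,
`P^(i,j)(t) = P^(i,j) t` with `ρ(P) < 1`, the fixed point equation
`A^(i)(t) = N^(i) + λ^(i) t + Σ_j P^(j,i) D^(j)(t)`,
`D^(i)(t) = μ^(i) t ∧ inf_{0≤s≤t}(A^(i)(s) + μ^(i)(t-s))`
has a unique solution, and it satisfies `D^(i)(t) = A^(i)(t) ∧ μ^(i) t`, i.e.
`A(t) = x(μ t, P, N + λ t)`. -/
theorem linear_network_fixed_point (K : ℕ) (P : Matrix (Fin K) (Fin K) ℝ)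
    (hP0 : ∀ i j, 0 ≤ P i j) (hP1 : ∀ i, ∑ j, P i j ≤ 1) (hρ : SpecRadiusLtOne P)
    (N₀ lam μ : Fin K → ℝ)
    (hN₀ : ∀ i, 0 ≤ N₀ i) (hlam : ∀ i, 0 ≤ lam i) (hμ : ∀ i, 0 ≤ μ i) :
    -- the system of equations, for non-decreasing nonnegative A, D on [0, ∞):
    (∃ A D : ℝ → Fin K → ℝ,
      ((∀ i, MonotoneOn (fun t => A t i) (Set.Ici 0)) ∧
       (∀ i, MonotoneOn (fun t => D t i) (Set.Ici 0)) ∧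
       (∀ t ≥ (0:ℝ), ∀ i, 0 ≤ A t i ∧ 0 ≤ D t i) ∧
       (∀ t ≥ (0:ℝ), ∀ i, A t i = N₀ i + lam i * t + ∑ j, P j i * D t j) ∧
       (∀ t ≥ (0:ℝ), ∀ i,
         D t i = min (μ i * t)
           (sInf ((fun s => A s i + μ i * (t - s)) '' Set.Icc 0 t)))) ∧
      -- the solution is given by the static fixed point `x(μt, P, N + λt)`:
      (∀ t ≥ (0:ℝ), ∀ i, D t i = min (A t i) (μ i * t))) ∧
    -- uniqueness on [0, ∞):
    (∀ A D A' D' : ℝ → Fin K → ℝ,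
      ((∀ i, MonotoneOn (fun t => A t i) (Set.Ici 0)) ∧
       (∀ i, MonotoneOn (fun t => D t i) (Set.Ici 0)) ∧
       (∀ t ≥ (0:ℝ), ∀ i, 0 ≤ A t i ∧ 0 ≤ D t i) ∧
       (∀ t ≥ (0:ℝ), ∀ i, A t i = N₀ i + lam i * t + ∑ j, P j i * D t j) ∧
       (∀ t ≥ (0:ℝ), ∀ i,
         D t i = min (μ i * t)
           (sInf ((fun s => A s i + μ i * (t - s)) '' Set.Icc 0 t)))) →
      ((∀ i, MonotoneOn (fun t => A' t i) (Set.Ici 0)) ∧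
       (∀ i, MonotoneOn (fun t => D' t i) (Set.Ici 0)) ∧
       (∀ t ≥ (0:ℝ), ∀ i, 0 ≤ A' t i ∧ 0 ≤ D' t i) ∧
       (∀ t ≥ (0:ℝ), ∀ i, A' t i = N₀ i + lam i * t + ∑ j, P j i * D' t j) ∧
       (∀ t ≥ (0:ℝ), ∀ i,
         D' t i = min (μ i * t)
           (sInf ((fun s => A' s i + μ i * (t - s)) '' Set.Icc 0 t)))) →
      ∀ t ≥ (0:ℝ), A t = A' t ∧ D t = D' t) := by
  constructor
  · refine ⟨LNFPaux.calA P N₀ lam μ, fun t i => min (LNFPaux.calA P N₀ lam μ t i) (μ i * t),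
      ⟨?_, ?_, ?_, ?_, ?_⟩, ?_⟩
    · intro i s hs t ht hst
      exact LNFPaux.calA_mono_t P N₀ lam μ hP0 hN₀ hlam hμ hs hst i
    · intro i s hs t ht hst
      exact min_le_min (LNFPaux.calA_mono_t P N₀ lam μ hP0 hN₀ hlam hμ hs hst i)
        (mul_le_mul_of_nonneg_left hst (hμ i))
    · intro t ht i
      exact ⟨LNFPaux.calA_nonneg P N₀ lam μ hP0 hN₀ hlam hμ ht i,
        le_min (LNFPaux.calA_nonneg P N₀ lam μ hP0 hN₀ hlam hμ ht i)
          (mul_nonneg (hμ i) ht)⟩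
    · intro t ht i
      exact LNFPaux.calA_fixed P N₀ lam μ hP0 hN₀ hlam hμ ht i
    · intro t ht i
      exact (LNFPaux.sInf_calA P N₀ lam μ hP0 hN₀ hlam hμ ht i).symm
    · intro t ht i
      rfl
  · rintro A D A' D' ⟨hAm, hDm, hpos, hAeq, hDeq⟩ ⟨hAm', hDm', hpos', hAeq', hDeq'⟩ t ht
    have e1 := LNFPaux.sol_eq P N₀ lam μ hP0 hN₀ hlam hμ hP1 hρ A D hpos hAm hAeq hDeq
    have e2 := LNFPaux.sol_eq P N₀ lam μ hP0 hN₀ hlam hμ hP1 hρ A' D' hpos' hAm' hAeq' hDeq'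
    constructor
    · funext i
      rw [e1 t ht i, e2 t ht i]
    · funext i
      rw [hDeq t ht i, hDeq' t ht i]
      congr 2
      apply Set.image_congr
      intro s hs
      have hs0 : (0:ℝ) ≤ s := hs.1
      rw [e1 s hs0 i, e2 s hs0 i]
end
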